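/- arXiv:2110.13302 — 3 statements merged into one kernel-verified Lean document; each statement's English description precedes it below -/
import Mathlib

section
/- Let r = (R_j)_{j≥1} be a generic sequence of radii and c ∈ C(r). For every z ∈ ℂ_p: if z ∈ B_0 and z ≠ 0, then |f_c'(z)| = |f_c(z)|/(p·|z|); if z ∈ B_j for some j ≥ 1, then |f_c'(z)| = φ(R_j)/R_j; and if z ∈ A, then |f_c'(z)| ≤ |f_c(z)|/|z|. -/
noncomputable section

/-- `K` is a model of `ℂ_p`, the completion of an algebraic closure of `ℚ_p`:
it is a complete, algebraically closed, nonarchimedean normed field whose norm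
extends the `p`-adic absolute value and in which the algebraic elements over
`ℚ_p` are dense. -/
structure IsCp (p : ℕ) [Fact p.Prime] (K : Type*) [NormedField K] [Algebra ℚ_[p] K] : Prop where
  complete : CompleteSpace K
  norm_extends : ∀ x : ℚ_[p], ‖algebraMap ℚ_[p] K x‖ = ‖x‖
  isAlgClosed : IsAlgClosed K
  dense_algebraic : Dense {x : K | IsAlgebraic ℚ_[p] x}
  isNonarch : ∀ x y : K, ‖x + y‖ ≤ max ‖x‖ ‖y‖

/-- `ϱ = p^{-1/(p-1)}`. -/
def rho (p : ℕ) : ℝ := (p : ℝ) ^ (-1 / ((p : ℝ) - 1))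

/-- `R` is a sequence of radii: strictly increasing (for indices `≥ 1`),
with `R 1 > p`, tending to infinity. -/
def IsRadii (p : ℕ) (R : ℕ → ℝ) : Prop :=
  (∀ j, 1 ≤ j → R j < R (j + 1)) ∧ (p : ℝ) < R 1 ∧
    Filter.Tendsto R Filter.atTop Filter.atTop

/-- The piecewise-monomial map `φ`: for `R_{j-1} < t ≤ R_j` (with `R_0 := 0`),
`φ(t) = p (R_1 ⋯ R_{j-1})⁻¹ t^{p+j-1}`. -/
def phi (p : ℕ) (R : ℕ → ℝ) (t : ℝ) : ℝ :=
  let j := sInf {j : ℕ | 1 ≤ j ∧ t ≤ R j}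
  (p : ℝ) * (∏ i ∈ Finset.Icc 1 (j - 1), R i)⁻¹ * t ^ (p + j - 1)

/-- A generic sequence of radii. -/
def IsGenericRadii (p : ℕ) (R : ℕ → ℝ) : Prop :=
  IsRadii p R ∧ ∀ i j n : ℕ, 1 ≤ i → i < j → 1 ≤ n → (phi p R)^[n] (R i) ≠ R j

/-- Membership in the parameter space `C(r)`: `|c_j| = R_j` for all `j ≥ 1`. -/
def InC (p : ℕ) [Fact p.Prime] {K : Type*} [NormedField K] (R : ℕ → ℝ) (c : ℕ → K) : Prop :=
  ∀ j, 1 ≤ j → ‖c j‖ = R j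

/-- The transcendental entire map `f_c(z) = (z^p/p) ∏_{j ≥ 1} (1 - z/c_j)`. -/
def fc (p : ℕ) {K : Type*} [NormedField K] (c : ℕ → K) (z : K) : K :=
  z ^ p / (p : K) * ∏' j : ℕ, (1 - z / c (j + 1))

/-- The disk `B_0 = {|z| < 1}` for `j = 0`, and `B_j = {|z - c_j| < R_j}` for `j ≥ 1`. -/
def Bset {K : Type*} [NormedField K] (R : ℕ → ℝ) (c : ℕ → K) (j : ℕ) : Set K :=
  if j = 0 then {z : K | ‖z‖ < 1} else {z : K | ‖z - c j‖ < R j}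

/-- The set `A`, complement of all the disks `B_j`, `j ≥ 0`. -/
def Aset {K : Type*} [NormedField K] (R : ℕ → ℝ) (c : ℕ → K) : Set K :=
  (⋃ j, Bset R c j)ᶜ

/-- `n_j`, the minimal `n ≥ 1` with `R_j < φ^{∘(n+1)}(1)`. -/
def nseq (p : ℕ) (R : ℕ → ℝ) (j : ℕ) : ℕ :=
  sInf {n : ℕ | 1 ≤ n ∧ R j < (phi p R)^[n + 1] 1}

/-- `S_j = φ⁻¹(R_j)`. -/
def Sse (p : ℕ) (R : ℕ → ℝ) (j : ℕ) : ℝ := Function.invFun (phi p R) (R j)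

/-- `λ_j = φ(R_j)/R_j`. -/
def lam (p : ℕ) (R : ℕ → ℝ) (j : ℕ) : ℝ := phi p R (R j) / R j

/-- `L_k`: index of the first symbol of the `k`-th block `B_0^{m_k} A^{n_k} B_k^{…}`
of the itinerary `α(m, ℓ)`; `L_1 = 0` and `L_{k+1} = L_k + m_k + n_k + ℓ_{k+1}`. -/
def Lseq (m n l : ℕ → ℕ) : ℕ → ℕ
  | 0 => 0
  | 1 => 0
  | k + 2 => Lseq m n l (k + 1) + m (k + 1) + n (k + 1) + l (k + 2)

/-- `N_k = L_k + m_k + n_k`, the index of the final symbol `B_k` of the truncated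
itinerary `α^{(k)}` (so `α^{(k)}` has length `N_k + 1`). -/
def Nseq (m n l : ℕ → ℕ) (k : ℕ) : ℕ := Lseq m n l k + m k + n k

/-- The symbol (`some 0 = B_0`, `none = A`, `some k = B_k`) at position `i` of the
itinerary `α(m,ℓ) = B_0^{m_1} A^{n_1} B_1^{ℓ_2} B_0^{m_2} A^{n_2} B_2^{ℓ_3} ⋯`. -/
def itin (m n l : ℕ → ℕ) (i : ℕ) : Option ℕ :=
  let k := sSup {k : ℕ | 1 ≤ k ∧ Lseq m n l k ≤ i}
  if i < Lseq m n l k + m k then some 0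
  else if i < Lseq m n l k + m k + n k then none
  else some k

/-- The subset of `ℂ_p` corresponding to a symbol of the alphabet `{A, B_0, B_1, …}`. -/
def symbSet {K : Type*} [NormedField K] (R : ℕ → ℝ) (c : ℕ → K) : Option ℕ → Set K
  | none => Aset R c
  | some j => Bset R c j

/-- Condition (3.2) at `k`: `ϱ⁻¹ R_k p^{-m_k} λ_k^{ℓ_{k+1}} < 1`. -/
def Cond32 (p : ℕ) (R : ℕ → ℝ) (m l : ℕ → ℕ) (k : ℕ) : Prop :=
  (rho p)⁻¹ * R k * ((p : ℝ) ^ m k)⁻¹ * lam p R k ^ l (k + 1) < 1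

/-- Condition (3.3) for `k`: for all `2 ≤ j < k`,
`ε_k < ϱ^{k-j} R_k² (R_{j-1} S_{j-1})⁻¹ λ_{j-1}^{-ℓ_j}`. -/
def Cond33 (p : ℕ) (R : ℕ → ℝ) (ε : ℕ → ℝ) (l : ℕ → ℕ) (k : ℕ) : Prop :=
  ∀ j, 2 ≤ j → j < k →
    ε k < rho p ^ (k - j) * R k ^ 2 * (R (j - 1) * Sse p R (j - 1))⁻¹ *
      (lam p R (j - 1) ^ l j)⁻¹

/-- Condition (3.4) for `k`: for all `2 ≤ j ≤ k`,
`ϱ^{-2} R_{j-1} S_{j-1} λ_{j-1}^{ℓ_j} p^{-m_j} < 1`. -/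
def Cond34 (p : ℕ) (R : ℕ → ℝ) (m l : ℕ → ℕ) (k : ℕ) : Prop :=
  ∀ j, 2 ≤ j → j ≤ k →
    ((rho p) ^ 2)⁻¹ * (R (j - 1) * Sse p R (j - 1)) * lam p R (j - 1) ^ l j *
      ((p : ℝ) ^ m j)⁻¹ < 1

/-- Condition (3.5) at `k`: `p ϱ⁻¹ R_{k+1}² S_k⁻¹ λ_k^{-ℓ_{k+1}} < ε_{k+1}`. -/
def Cond35 (p : ℕ) (R : ℕ → ℝ) (ε : ℕ → ℝ) (l : ℕ → ℕ) (k : ℕ) : Prop :=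
  (p : ℝ) * (rho p)⁻¹ * R (k + 1) ^ 2 * (Sse p R k)⁻¹ * (lam p R k ^ l (k + 1))⁻¹ < ε (k + 1)

/-- `c' ∈ Δ_k(c, ε)`. -/
def InDelta (p : ℕ) [Fact p.Prime] {K : Type*} [NormedField K] (R : ℕ → ℝ) (c : ℕ → K)
    (ε : ℕ → ℝ) (k : ℕ) (c' : ℕ → K) : Prop :=
  InC p R c' ∧ (∀ j, 1 ≤ j → j < k → c' j = c j) ∧ ∀ j, k ≤ j → ‖c' j - c j‖ < ε j

/-- `c' ∈ U_k(c, ε)`. -/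
def InU (p : ℕ) [Fact p.Prime] {K : Type*} [NormedField K] (R : ℕ → ℝ) (c : ℕ → K)
    (k : ℕ) (ε : ℝ) (c' : ℕ → K) : Prop :=
  InC p R c' ∧ ‖c' k - c k‖ < ε ∧ ∀ j, 1 ≤ j → j ≠ k → c' j = c j


open Filter Topology Finset

/-! Write `b j = c (j + 1)`, so that `f_c(z) = (z^p/p) F(z)` with `F(z) = ∏ (1 - z/b_j)` and
`f_c' = z^{p-1} F + (z^p/p) F'`. In a complete ultrametric field the partial products `P_n`
converge to `F` and their derivatives `P_n'` to `F'`, because the remainder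
`P_n(w) - P_n(z) - (w - z) P_n'(z)` is `O(|w - z|^2)` uniformly in `n`. The recursion
`P_{n+1}' = P_n' (1 - z/b_n) - P_n/b_n` and the strict triangle inequality give
`|P_n'| ≤ |P_n|/r` when all the `b_i` are at distance `≥ r` from `z`, and, when `z` is close to
`b_k`, `|P_n'| = |P_k|/|b_k|` for all `n > k`. Hence one of the two terms of `f_c'` dominates:
the first on `B_0` (there `|F| = 1` and `|F'| ≤ 1/R_1 < 1/p`), the second on `B_j`; on `A` both
are at most `|f_c(z)|/|z|`. -/

theorem hasDerivAt_of_tendsto_of_norm_sub_sub_le {𝕜 E ι : Type*} [NontriviallyNormedField 𝕜]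
    [NormedAddCommGroup E] [NormedSpace 𝕜 E] {l : Filter ι} [l.NeBot] {f : ι → 𝕜 → E}
    {g : 𝕜 → E} {f' : ι → E} {g' : E} {z : 𝕜} {C : ℝ}
    (hf : ∀ w, Tendsto (f · w) l (𝓝 (g w))) (hf' : Tendsto f' l (𝓝 g'))
    (hC : ∀ᶠ w in 𝓝 z, ∀ n, ‖f n w - f n z - (w - z) • f' n‖ ≤ C * ‖w - z‖ ^ 2) :
    HasDerivAt g g' z := by
  rw [hasDerivAt_iff_isLittleO]
  refine (Asymptotics.IsBigO.of_bound C ?_).trans_isLittleO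
    (Asymptotics.isLittleO_pow_sub_sub z one_lt_two)
  filter_upwards [hC] with w hw
  rw [Real.norm_of_nonneg (by positivity)]
  exact le_of_tendsto (((hf w).sub (hf z)).sub (hf'.const_smul (w - z))).norm
    (Eventually.of_forall hw)

namespace IsUltrametricDist

variable {S : Type*} [SeminormedAddCommGroup S] [IsUltrametricDist S] {x y : S}

theorem norm_add_eq_left_of_norm_lt (h : ‖y‖ < ‖x‖) : ‖x + y‖ = ‖x‖ := by
  rw [norm_add_eq_max_of_norm_ne_norm h.ne', max_eq_left h.le]

theorem norm_add_eq_right_of_norm_lt (h : ‖x‖ < ‖y‖) : ‖x + y‖ = ‖y‖ := by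
  rw [add_comm, norm_add_eq_left_of_norm_lt h]

theorem norm_sub_eq_left_of_norm_lt (h : ‖y‖ < ‖x‖) : ‖x - y‖ = ‖x‖ := by
  rw [sub_eq_add_neg, norm_add_eq_left_of_norm_lt (by rwa [norm_neg])]

theorem norm_sub_eq_right_of_norm_lt (h : ‖x‖ < ‖y‖) : ‖x - y‖ = ‖y‖ := by
  rw [norm_sub_rev, norm_sub_eq_left_of_norm_lt h]

theorem norm_eq_of_norm_sub_lt (h : ‖x - y‖ < ‖x‖) : ‖y‖ = ‖x‖ := by
  have := norm_eq_of_add_norm_lt_max (x := x) (y := -y)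
    (by simpa [← sub_eq_add_neg] using h.trans_le (le_max_left _ ‖y‖))
  simpa using this.symm

end IsUltrametricDist

open IsUltrametricDist

section NormedField

variable {K : Type*} [NormedField K]

theorem norm_one_sub_div {x y : K} (hy : y ≠ 0) : ‖1 - x / y‖ = ‖y - x‖ / ‖y‖ := by
  rw [one_sub_div hy, norm_div]

variable [IsUltrametricDist K]

theorem norm_one_sub_div_of_norm_lt {x y : K} (h : ‖x‖ < ‖y‖) : ‖1 - x / y‖ = 1 := by
  have hy : y ≠ 0 := norm_pos_iff.mp ((norm_nonneg x).trans_lt h)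
  rw [norm_one_sub_div hy, norm_sub_eq_left_of_norm_lt h, div_self (norm_ne_zero_iff.mpr hy)]

theorem multipliable_one_add_of_tendsto_cofinite_zero [CompleteSpace K] {ι : Type*} {f : ι → K}
    (hf : Tendsto f cofinite (𝓝 0)) : Multipliable (fun i => 1 + f i) := by
  classical
  refine multipliable_one_add_of_summable_prod
    (NonarchimedeanAddGroup.summable_of_tendsto_cofinite_zero ?_)
  have hf_norm : Tendsto (‖f ·‖) cofinite (𝓝 0) := by simpa using hf.norm
  obtain ⟨T, hT⟩ : ∃ T : Finset ι, ∀ i ∉ T, ‖f i‖ ≤ 1 := by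
    have := eventually_cofinite.mp (hf_norm.eventually (eventually_le_nhds one_pos))
    exact ⟨this.toFinset, fun i hi => by simpa using hi⟩
  set C := ∏ i ∈ T, max 1 ‖f i‖
  have hC : 0 < C := prod_pos fun i _ => one_pos.trans_le (le_max_left _ _)
  -- A factor outside `T` controls the whole product, the others contribute at most `C`.
  have key : ∀ s : Finset ι, ∀ i ∈ s, i ∉ T → ‖∏ j ∈ s, f j‖ ≤ C * ‖f i‖ := by
    intro s i hi hiT
    rw [norm_prod, ← mul_prod_erase s _ hi, mul_comm]
    refine mul_le_mul_of_nonneg_right ?_ (norm_nonneg _)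
    calc ∏ j ∈ s.erase i, ‖f j‖ ≤ ∏ j ∈ s.erase i, max 1 ‖f j‖ :=
          prod_le_prod (fun _ _ => norm_nonneg _) fun _ _ => le_max_right _ _
      _ = ∏ j ∈ s.erase i with j ∈ T, max 1 ‖f j‖ :=
          (prod_filter_of_ne fun j _ hj => by_contra fun hjT => hj (max_eq_left (hT j hjT))).symm
      _ ≤ C := prod_le_prod_of_subset_of_one_le (fun j hj => (mem_filter.mp hj).2)
          (fun _ _ => zero_le_one.trans (le_max_left _ _)) fun _ _ _ => le_max_left _ _
  rw [NormedAddGroup.tendsto_nhds_zero]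
  intro ε hε
  have hU := eventually_cofinite.mp (hf_norm.eventually (gt_mem_nhds (div_pos hε hC)))
  refine eventually_cofinite.mpr ((hU.toFinset ∪ T).powerset.finite_toSet.subset fun s hs => ?_)
  simp only [Set.mem_ofPred_eq, not_lt, coe_powerset, Set.mem_preimage, Set.mem_powerset_iff,
    coe_subset] at hs ⊢
  intro i hi
  by_contra hiUT
  simp only [mem_union, Set.Finite.mem_toFinset, Set.mem_ofPred_eq, not_or, not_le] at hiUT
  have := key s i hi hiUT.2
  rw [lt_div_iff₀ hC] at hiUT
  linarith [hiUT.1]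

end NormedField

def weierstrassProd {K : Type*} [NormedField K] (b : ℕ → K) (w : K) : K := ∏' j, (1 - w / b j)

namespace weierstrassProd

section Partial

variable {K : Type*} [NormedField K]

def partialProd (b : ℕ → K) (w : K) (n : ℕ) : K := ∏ i ∈ range n, (1 - w / b i)

/-- The derivative at `w` of `partialProd b · n`, by the product rule. -/
def partialDeriv (b : ℕ → K) (w : K) : ℕ → K
  | 0 => 0
  | n + 1 => partialDeriv b w n * (1 - w / b n) - partialProd b w n / b n

def partialBound (b : ℕ → K) (w : K) (n : ℕ) : ℝ := ∏ i ∈ range n, max 1 ‖1 - w / b i‖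

variable {b : ℕ → K} {z w : K}

theorem partialProd_succ (n : ℕ) :
    partialProd b w (n + 1) = partialProd b w n * (1 - w / b n) :=
  prod_range_succ _ _

theorem partialBound_succ (n : ℕ) :
    partialBound b w (n + 1) = partialBound b w n * max 1 ‖1 - w / b n‖ :=
  prod_range_succ _ _

theorem one_le_partialBound (n : ℕ) : 1 ≤ partialBound b w n :=
  one_le_prod fun _ _ => le_max_left _ _

theorem partialBound_mono : Monotone (partialBound b w) :=
  monotone_nat_of_le_succ fun n => by
    rw [partialBound_succ]
    exact le_mul_of_one_le_right (zero_le_one.trans (one_le_partialBound n)) (le_max_left _ _)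

variable [IsUltrametricDist K]

theorem exists_partialBound_le (hb_top : Tendsto (‖b ·‖) atTop atTop) (w : K) :
    ∃ C, ∀ n, partialBound b w n ≤ C := by
  obtain ⟨N, hN⟩ := eventually_atTop.mp (hb_top.eventually_gt_atTop ‖w‖)
  refine ⟨partialBound b w N, fun n => (partialBound_mono (le_max_left n N)).trans_eq ?_⟩
  rw [partialBound, partialBound, ← prod_range_mul_prod_Ico _ (le_max_right n N),
    prod_eq_one (s := Ico N (max n N)) fun i hi => ?_, mul_one]
  rw [norm_one_sub_div_of_norm_lt (hN i (mem_Ico.mp hi).1), max_self]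

theorem norm_partialProd_le (hb₁ : ∀ i, 1 ≤ ‖b i‖) (hw : ‖w - z‖ ≤ 1) (n : ℕ) :
    ‖partialProd b w n‖ ≤ partialBound b z n := by
  rw [partialProd, norm_prod]
  refine prod_le_prod (fun _ _ => norm_nonneg _) fun i _ => ?_
  have : 1 - w / b i = (1 - z / b i) - (w - z) / b i := by ring
  rw [this, sub_eq_add_neg]
  refine (IsUltrametricDist.norm_add_le_max _ _).trans (max_le (le_max_right _ _) ?_)
  rw [norm_neg, norm_div]
  exact (div_le_one_of_le₀ (hw.trans (hb₁ i)) (norm_nonneg _)).trans (le_max_left _ _)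

theorem norm_partialDeriv_le (hb₁ : ∀ i, 1 ≤ ‖b i‖) (n : ℕ) :
    ‖partialDeriv b z n‖ ≤ partialBound b z n := by
  induction n with
  | zero => simp [partialDeriv, partialBound]
  | succ n ih =>
    rw [partialDeriv, sub_eq_add_neg, partialBound_succ]
    have hM := zero_le_one.trans (one_le_partialBound (b := b) (w := z) n)
    refine (IsUltrametricDist.norm_add_le_max _ _).trans (max_le ?_ ?_)
    · rw [norm_mul]
      exact mul_le_mul ih (le_max_right _ _) (norm_nonneg _) hM
    · rw [norm_neg, norm_div]
      calc ‖partialProd b z n‖ / ‖b n‖ ≤ partialBound b z n :=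
            div_le_of_le_mul₀ (norm_nonneg _) hM
              ((norm_partialProd_le (w := z) hb₁ (by simp) n).trans
                (le_mul_of_one_le_right hM (hb₁ n)))
        _ ≤ _ := le_mul_of_one_le_right hM (le_max_left _ _)

theorem norm_partialProd_sub_le (hb₁ : ∀ i, 1 ≤ ‖b i‖) (hw : ‖w - z‖ ≤ 1) (n : ℕ) :
    ‖partialProd b w n - partialProd b z n‖ ≤ partialBound b z n * ‖w - z‖ := by
  induction n with
  | zero => simp [partialProd, partialBound]
  | succ n ih =>
    have hM := zero_le_one.trans (one_le_partialBound (b := b) (w := z) n)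
    have : partialProd b w (n + 1) - partialProd b z (n + 1) =
        (partialProd b w n - partialProd b z n) * (1 - z / b n) +
          -(partialProd b w n * ((w - z) / b n)) := by
      rw [partialProd_succ, partialProd_succ]; ring
    rw [this, partialBound_succ]
    refine (IsUltrametricDist.norm_add_le_max _ _).trans (max_le ?_ ?_)
    · rw [norm_mul, mul_right_comm]
      exact mul_le_mul ih (le_max_right _ _) (norm_nonneg _) (by positivity)
    · rw [norm_neg, norm_mul, norm_div]
      calc ‖partialProd b w n‖ * (‖w - z‖ / ‖b n‖) ≤ partialBound b z n * ‖w - z‖ :=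
            mul_le_mul (norm_partialProd_le hb₁ hw n)
              (div_le_self (norm_nonneg _) (hb₁ n)) (by positivity) hM
        _ ≤ _ := by
          rw [mul_right_comm]
          exact le_mul_of_one_le_right (by positivity) (le_max_left _ _)

theorem norm_partialProd_sub_sub_le (hb₁ : ∀ i, 1 ≤ ‖b i‖) (hw : ‖w - z‖ ≤ 1) (n : ℕ) :
    ‖partialProd b w n - partialProd b z n - (w - z) * partialDeriv b z n‖ ≤
      partialBound b z n * ‖w - z‖ ^ 2 := by
  induction n with
  | zero => simp [partialProd, partialDeriv, partialBound]
  | succ n ih =>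
    have hM := zero_le_one.trans (one_le_partialBound (b := b) (w := z) n)
    have : partialProd b w (n + 1) - partialProd b z (n + 1) -
          (w - z) * partialDeriv b z (n + 1) =
        (partialProd b w n - partialProd b z n - (w - z) * partialDeriv b z n) * (1 - z / b n) +
          -((partialProd b w n - partialProd b z n) * ((w - z) / b n)) := by
      rw [partialProd_succ, partialProd_succ, partialDeriv]; ring
    rw [this, partialBound_succ]
    refine (IsUltrametricDist.norm_add_le_max _ _).trans (max_le ?_ ?_)
    · rw [norm_mul, mul_right_comm]
      exact mul_le_mul ih (le_max_right _ _) (norm_nonneg _) (by positivity)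
    · rw [norm_neg, norm_mul, norm_div]
      calc ‖partialProd b w n - partialProd b z n‖ * (‖w - z‖ / ‖b n‖)
          ≤ partialBound b z n * ‖w - z‖ * ‖w - z‖ :=
            mul_le_mul (norm_partialProd_sub_le hb₁ hw n)
              (div_le_self (norm_nonneg _) (hb₁ n)) (by positivity) (by positivity)
        _ ≤ _ := by
          rw [mul_assoc, ← sq, mul_right_comm]
          exact le_mul_of_one_le_right (by positivity) (le_max_left _ _)

theorem cauchySeq_partialDeriv (hb₁ : ∀ i, 1 ≤ ‖b i‖)
    (hb_top : Tendsto (‖b ·‖) atTop atTop) (z : K) : CauchySeq (partialDeriv b z) := by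
  obtain ⟨C, hC⟩ := exists_partialBound_le hb_top z
  refine NonarchimedeanAddGroup.cauchySeq_of_tendsto_sub_nhds_zero ?_
  rw [tendsto_zero_iff_norm_tendsto_zero]
  refine squeeze_zero (fun _ => norm_nonneg _) (fun n => ?_)
    (tendsto_const_nhds.div_atTop hb_top :
      Tendsto (fun n => C * max 1 ‖z‖ / ‖b n‖) atTop (𝓝 0))
  have hC0 : 0 ≤ C := zero_le_one.trans ((one_le_partialBound 0).trans (hC 0))
  have : partialDeriv b z (n + 1) - partialDeriv b z n =
      -(partialDeriv b z n * z / b n) + -(partialProd b z n / b n) := by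
    rw [partialDeriv]; ring
  rw [this]
  refine (IsUltrametricDist.norm_add_le_max _ _).trans (max_le ?_ ?_) <;>
    rw [norm_neg, norm_div] <;> gcongr
  · rw [norm_mul]
    exact mul_le_mul ((norm_partialDeriv_le hb₁ n).trans (hC n)) (le_max_right _ _)
      (norm_nonneg _) hC0
  · exact (norm_partialProd_le (w := z) hb₁ (by simp) n).trans
      ((hC n).trans (le_mul_of_one_le_right hC0 (le_max_left _ _)))

theorem norm_partialDeriv_le_div (hb₀ : ∀ i, b i ≠ 0) {r : ℝ} (hr : 0 < r) :
    ∀ n, (∀ i < n, r ≤ ‖b i - z‖) → ‖partialDeriv b z n‖ ≤ ‖partialProd b z n‖ / r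
  | 0, _ => by simp [partialDeriv, partialProd, hr.le]
  | n + 1, h => by
    rw [partialDeriv, partialProd_succ, sub_eq_add_neg, norm_mul,
      norm_one_sub_div (hb₀ n)]
    refine (IsUltrametricDist.norm_add_le_max _ _).trans (max_le ?_ ?_)
    · rw [norm_mul, norm_one_sub_div (hb₀ n), mul_div_right_comm]
      gcongr
      exact norm_partialDeriv_le_div hb₀ hr n fun i hi => h i (hi.trans n.lt_succ_self)
    · rw [norm_neg, norm_div, le_div_iff₀ hr, div_mul_eq_mul_div, mul_div_assoc]
      gcongr
      exact h n n.lt_succ_self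

section NearZero

variable (hb₀ : ∀ i, b i ≠ 0) (hmono : StrictMono (‖b ·‖)) {k : ℕ} (hz : ‖b k - z‖ < ‖b k‖)
include hb₀ hmono hz

theorem norm_partialProd_eq_prod_of_norm_sub_lt :
    ‖partialProd b z k‖ = ∏ i ∈ range k, ‖z‖ / ‖b i‖ := by
  refine (norm_prod _ _).trans (prod_congr rfl fun i hi => ?_)
  rw [norm_one_sub_div (hb₀ i),
    norm_sub_eq_right_of_norm_lt ((norm_eq_of_norm_sub_lt hz).symm ▸ hmono (mem_range.mp hi))]

theorem norm_partialProd_pos_of_norm_sub_lt : 0 < ‖partialProd b z k‖ := by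
  rw [norm_partialProd_eq_prod_of_norm_sub_lt hb₀ hmono hz, norm_eq_of_norm_sub_lt hz]
  exact prod_pos fun i _ => div_pos (norm_pos_iff.mpr (hb₀ k)) (norm_pos_iff.mpr (hb₀ i))

omit hb₀ in
theorem norm_partialProd_of_lt {n : ℕ} (hn : k < n) :
    ‖partialProd b z n‖ = ‖partialProd b z k‖ * ‖1 - z / b k‖ := by
  induction n, hn using Nat.le_induction with
  | base => rw [partialProd_succ, norm_mul]
  | succ n hn ih =>
    have hzn : ‖z‖ < ‖b n‖ := norm_eq_of_norm_sub_lt hz ▸ hmono hn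
    rw [partialProd_succ, norm_mul, norm_one_sub_div_of_norm_lt hzn, mul_one, ih]

theorem norm_partialDeriv_of_lt {n : ℕ} (hn : k < n) :
    ‖partialDeriv b z n‖ = ‖partialProd b z k‖ / ‖b k‖ := by
  have hzk : ‖z‖ = ‖b k‖ := norm_eq_of_norm_sub_lt hz
  have hbk : 0 < ‖b k‖ := norm_pos_iff.mpr (hb₀ k)
  have hP := norm_partialProd_pos_of_norm_sub_lt hb₀ hmono hz
  have hratio : ‖1 - z / b k‖ < 1 := by
    rwa [norm_one_sub_div (hb₀ k), div_lt_one hbk]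
  induction n, hn using Nat.le_induction with
  | base =>
    have hdk : ‖partialDeriv b z k‖ ≤ ‖partialProd b z k‖ / ‖b k‖ := by
      refine hzk ▸ norm_partialDeriv_le_div hb₀ (hzk ▸ hbk) k fun i hi => ?_
      rw [norm_sub_eq_right_of_norm_lt (hzk ▸ hmono hi)]
    have hsmall : ‖partialDeriv b z k * (1 - z / b k)‖ < ‖partialProd b z k / b k‖ := by
      rw [norm_mul, norm_div]
      calc ‖partialDeriv b z k‖ * ‖1 - z / b k‖
          ≤ ‖partialProd b z k‖ / ‖b k‖ * ‖1 - z / b k‖ := by gcongr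
        _ < ‖partialProd b z k‖ / ‖b k‖ := mul_lt_of_lt_one_right (by positivity) hratio
    rw [partialDeriv, norm_sub_eq_right_of_norm_lt hsmall, norm_div]
  | succ n hn ih =>
    have hzn : ‖z‖ < ‖b n‖ := hzk ▸ hmono hn
    have hdn : ‖partialDeriv b z n * (1 - z / b n)‖ = ‖partialProd b z k‖ / ‖b k‖ := by
      rw [norm_mul, ih, norm_one_sub_div_of_norm_lt hzn, mul_one]
    have hkn : ‖b k‖ < ‖b n‖ := hmono hn
    have hsmall : ‖partialProd b z n / b n‖ < ‖partialDeriv b z n * (1 - z / b n)‖ := by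
      rw [hdn, norm_div, norm_partialProd_of_lt hmono hz hn, mul_div_right_comm]
      calc ‖partialProd b z k‖ / ‖b n‖ * ‖1 - z / b k‖ < ‖partialProd b z k‖ / ‖b n‖ :=
            mul_lt_of_lt_one_right (div_pos hP (hbk.trans hkn)) hratio
        _ < ‖partialProd b z k‖ / ‖b k‖ := div_lt_div_of_pos_left hP hbk hkn
    rw [partialDeriv, norm_sub_eq_left_of_norm_lt hsmall, hdn]

end NearZero

end Partial

section Limit

variable {K : Type*} [NontriviallyNormedField K] [IsUltrametricDist K] [CompleteSpace K]
  {b : ℕ → K} {z : K}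

theorem multipliable (hb_top : Tendsto (‖b ·‖) atTop atTop) (w : K) :
    Multipliable (fun j => 1 - w / b j) := by
  simp_rw [sub_eq_add_neg]
  refine multipliable_one_add_of_tendsto_cofinite_zero ?_
  rw [Nat.cofinite_eq_atTop, tendsto_zero_iff_norm_tendsto_zero]
  simp_rw [norm_neg, norm_div]
  exact tendsto_const_nhds.div_atTop hb_top

theorem tendsto_partialProd (hb_top : Tendsto (‖b ·‖) atTop atTop) (w : K) :
    Tendsto (partialProd b w) atTop (𝓝 (weierstrassProd b w)) :=
  (weierstrassProd.multipliable hb_top w).hasProd.tendsto_prod_nat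

theorem hasDerivAt_of_tendsto (hb₁ : ∀ i, 1 ≤ ‖b i‖) (hb_top : Tendsto (‖b ·‖) atTop atTop)
    {g : K} (hg : Tendsto (partialDeriv b z) atTop (𝓝 g)) :
    HasDerivAt (weierstrassProd b) g z := by
  obtain ⟨C, hC⟩ := exists_partialBound_le hb_top z
  refine hasDerivAt_of_tendsto_of_norm_sub_sub_le (C := C) (tendsto_partialProd hb_top) hg ?_
  filter_upwards [Metric.closedBall_mem_nhds z one_pos] with w hw n
  rw [Metric.mem_closedBall, dist_eq_norm] at hw
  rw [smul_eq_mul]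
  exact (norm_partialProd_sub_sub_le hb₁ hw n).trans
    (mul_le_mul_of_nonneg_right (hC n) (sq_nonneg _))

theorem tendsto_partialDeriv (hb₁ : ∀ i, 1 ≤ ‖b i‖)
    (hb_top : Tendsto (‖b ·‖) atTop atTop) (z : K) :
    Tendsto (partialDeriv b z) atTop (𝓝 (deriv (weierstrassProd b) z)) := by
  obtain ⟨g, hg⟩ := cauchySeq_tendsto_of_complete (cauchySeq_partialDeriv hb₁ hb_top z)
  rwa [(hasDerivAt_of_tendsto hb₁ hb_top hg).deriv]

end Limit

end weierstrassProd

section WeierstrassProduct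

open weierstrassProd

variable {K : Type*} [NontriviallyNormedField K] [IsUltrametricDist K] [CompleteSpace K]
  {b : ℕ → K} {z : K}

theorem hasDerivAt_weierstrassProd (hb₁ : ∀ i, 1 ≤ ‖b i‖)
    (hb_top : Tendsto (‖b ·‖) atTop atTop) (z : K) :
    HasDerivAt (weierstrassProd b) (deriv (weierstrassProd b) z) z :=
  hasDerivAt_of_tendsto hb₁ hb_top (tendsto_partialDeriv hb₁ hb_top z)

theorem norm_weierstrassProd_eq_one (hb_top : Tendsto (‖b ·‖) atTop atTop)
    (hz : ∀ i, ‖z‖ < ‖b i‖) : ‖weierstrassProd b z‖ = 1 := by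
  refine tendsto_nhds_unique (tendsto_partialProd hb_top z).norm ?_
  simp [partialProd, norm_prod, norm_one_sub_div_of_norm_lt (hz _)]

theorem norm_deriv_weierstrassProd_le_div (hb₁ : ∀ i, 1 ≤ ‖b i‖)
    (hb_top : Tendsto (‖b ·‖) atTop atTop) {r : ℝ} (hr : 0 < r) (hz : ∀ i, r ≤ ‖b i - z‖) :
    ‖deriv (weierstrassProd b) z‖ ≤ ‖weierstrassProd b z‖ / r :=
  le_of_tendsto_of_tendsto' (tendsto_partialDeriv hb₁ hb_top z).norm
    ((tendsto_partialProd hb_top z).norm.div_const r)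
    fun n => norm_partialDeriv_le_div (fun i => norm_pos_iff.mp (one_pos.trans_le (hb₁ i))) hr n
      fun i _ => hz i

section NearZero

variable (hb₁ : ∀ i, 1 ≤ ‖b i‖) (hb_top : Tendsto (‖b ·‖) atTop atTop)
  (hmono : StrictMono (‖b ·‖)) {k : ℕ} (hz : ‖b k - z‖ < ‖b k‖)
include hb₁ hb_top hmono hz

theorem norm_deriv_weierstrassProd_of_norm_sub_lt :
    ‖deriv (weierstrassProd b) z‖ = (∏ i ∈ range k, ‖z‖ / ‖b i‖) / ‖b k‖ := by
  have hb₀ i : b i ≠ 0 := norm_pos_iff.mp (one_pos.trans_le (hb₁ i))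
  rw [← norm_partialProd_eq_prod_of_norm_sub_lt hb₀ hmono hz]
  exact tendsto_nhds_unique (tendsto_partialDeriv hb₁ hb_top z).norm
    (tendsto_const_nhds.congr' (eventually_atTop.mpr
      ⟨k + 1, fun n hn => (norm_partialDeriv_of_lt hb₀ hmono hz hn).symm⟩))

theorem norm_weierstrassProd_lt_of_norm_sub_lt :
    ‖weierstrassProd b z‖ < ‖z‖ * ‖deriv (weierstrassProd b) z‖ := by
  have hb₀ i : b i ≠ 0 := norm_pos_iff.mp (one_pos.trans_le (hb₁ i))
  have hF : ‖weierstrassProd b z‖ = ‖partialProd b z k‖ * ‖1 - z / b k‖ :=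
    tendsto_nhds_unique (tendsto_partialProd hb_top z).norm
      (tendsto_const_nhds.congr' (eventually_atTop.mpr
        ⟨k + 1, fun n hn => (norm_partialProd_of_lt hmono hz hn).symm⟩))
  have hratio : ‖1 - z / b k‖ < 1 := by
    rwa [norm_one_sub_div (hb₀ k), div_lt_one (norm_pos_iff.mpr (hb₀ k))]
  rw [hF, norm_deriv_weierstrassProd_of_norm_sub_lt hb₁ hb_top hmono hz,
    ← norm_partialProd_eq_prod_of_norm_sub_lt hb₀ hmono hz, norm_eq_of_norm_sub_lt hz,
    mul_div_cancel₀ _ (norm_ne_zero_iff.mpr (hb₀ k))]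
  exact mul_lt_of_lt_one_right (norm_partialProd_pos_of_norm_sub_lt hb₀ hmono hz) hratio

end NearZero

end WeierstrassProduct

section Radii

variable {p : ℕ} {R : ℕ → ℝ}

theorem IsRadii.strictMono_succ (hR : IsRadii p R) : StrictMono (fun i => R (i + 1)) :=
  strictMono_nat_of_lt_succ fun i => hR.1 (i + 1) (Nat.le_add_left 1 i)

theorem IsRadii.phi_apply (hR : IsRadii p R) (k : ℕ) :
    phi p R (R (k + 1)) = p * R (k + 1) ^ p * ∏ i ∈ range k, (R (k + 1) / R (i + 1)) := by
  have hj : sInf {j : ℕ | 1 ≤ j ∧ R (k + 1) ≤ R j} = k + 1 := by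
    refine le_antisymm (Nat.sInf_le ⟨k.succ_pos, le_rfl⟩)
      (le_csInf ⟨k + 1, k.succ_pos, le_rfl⟩ ?_)
    rintro j ⟨hj, hle⟩
    obtain ⟨j, rfl⟩ := Nat.exists_eq_add_of_le' hj
    exact Nat.succ_le_succ (hR.strictMono_succ.le_iff_le.mp hle)
  have hprod : ∏ i ∈ Icc 1 k, R i = ∏ i ∈ range k, R (i + 1) := by
    rw [← Ico_add_one_right_eq_Icc, prod_Ico_eq_prod_range]
    simp [add_comm]
  simp only [phi, hj, Nat.add_sub_cancel, hprod, prod_div_distrib, prod_const, card_range,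
    show p + (k + 1) - 1 = p + k by omega, pow_add]
  ring

end Radii

section Cp

variable {p : ℕ} [Fact p.Prime] {K : Type*} [NontriviallyNormedField K] [Algebra ℚ_[p] K]

theorem IsCp.norm_natCast (hK : IsCp p K) : ‖(p : K)‖ = (p : ℝ)⁻¹ := by
  rw [← map_natCast (algebraMap ℚ_[p] K) p, hK.norm_extends, Padic.norm_p]

theorem IsCp.isUltrametricDist (hK : IsCp p K) : IsUltrametricDist K :=
  IsUltrametricDist.isUltrametricDist_of_isNonarchimedean_norm hK.isNonarch

end Cp

theorem norm_pow_div_natCast_mul {K : Type*} [NormedField K] {p : ℕ}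
    (hp : ‖(p : K)‖ = (p : ℝ)⁻¹) (z x : K) :
    ‖z ^ p / (p : K) * x‖ = p * ‖z‖ ^ p * ‖x‖ := by
  rw [norm_mul, norm_div, norm_pow, hp, div_inv_eq_mul, mul_comm (‖z‖ ^ p)]

section ParameterSpace

variable {p : ℕ} [Fact p.Prime] {K : Type*} [NormedField K] {R : ℕ → ℝ} {c : ℕ → K}

theorem InC.norm_succ (hc : InC p R c) (i : ℕ) : ‖c (i + 1)‖ = R (i + 1) :=
  hc (i + 1) (Nat.le_add_left 1 i)

theorem InC.strictMono_norm_succ (hR : IsRadii p R) (hc : InC p R c) :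
    StrictMono fun i => ‖c (i + 1)‖ := by
  simpa only [hc.norm_succ] using hR.strictMono_succ

theorem InC.natCast_lt_norm_succ (hR : IsRadii p R) (hc : InC p R c) (i : ℕ) :
    (p : ℝ) < ‖c (i + 1)‖ :=
  hR.2.1.trans_le (hc.norm_succ 0 ▸ (hc.strictMono_norm_succ hR).monotone (Nat.zero_le i))

theorem InC.one_le_norm_succ (hR : IsRadii p R) (hc : InC p R c) (i : ℕ) :
    1 ≤ ‖c (i + 1)‖ :=
  (Nat.one_le_cast.mpr (Fact.out : p.Prime).one_le).trans (hc.natCast_lt_norm_succ hR i).le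

theorem InC.tendsto_norm_succ (hR : IsRadii p R) (hc : InC p R c) :
    Tendsto (fun i => ‖c (i + 1)‖) atTop atTop :=
  (hR.2.2.comp (tendsto_add_atTop_nat 1)).congr fun i => (hc.norm_succ i).symm

end ParameterSpace

section DerivFc

variable {p : ℕ} [Fact p.Prime] {K : Type*} [NontriviallyNormedField K] [IsUltrametricDist K]
  [CompleteSpace K] {R : ℕ → ℝ} {c : ℕ → K}

theorem deriv_fc_eq (hp : ‖(p : K)‖ = (p : ℝ)⁻¹) (hR : IsRadii p R) (hc : InC p R c) (z : K) :
    deriv (fc p c) z = z ^ (p - 1) * weierstrassProd (fun i => c (i + 1)) z +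
      z ^ p / p * deriv (weierstrassProd fun i => c (i + 1)) z := by
  have hp0 : (p : K) ≠ 0 := by
    rw [← norm_ne_zero_iff, hp]
    exact inv_ne_zero (Nat.cast_ne_zero.mpr (Fact.out : p.Prime).ne_zero)
  have hF := hasDerivAt_weierstrassProd (hc.one_le_norm_succ hR) (hc.tendsto_norm_succ hR) z
  refine (((hasDerivAt_pow p z).div_const (p : K)).mul hF).deriv.trans ?_
  field_simp

theorem norm_deriv_fc_of_norm_lt_one (hp : ‖(p : K)‖ = (p : ℝ)⁻¹) (hR : IsRadii p R)
    (hc : InC p R c) {z : K} (hz0 : z ≠ 0) (hz : ‖z‖ < 1) :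
    ‖deriv (fc p c) z‖ = ‖fc p c z‖ / (p * ‖z‖) := by
  set F := weierstrassProd fun i => c (i + 1)
  have hzc (i : ℕ) : ‖z‖ < ‖c (i + 1)‖ := hz.trans_le (hc.one_le_norm_succ hR i)
  have hF : ‖F z‖ = 1 := norm_weierstrassProd_eq_one (hc.tendsto_norm_succ hR) hzc
  have hp_pos : (0 : ℝ) < p := Nat.cast_pos.mpr (Fact.out : p.Prime).pos
  have hc1 : (p : ℝ) < ‖c 1‖ := hc.natCast_lt_norm_succ hR 0
  have hF' : ‖deriv F z‖ ≤ 1 / ‖c 1‖ := hF ▸ norm_deriv_weierstrassProd_le_div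
    (hc.one_le_norm_succ hR) (hc.tendsto_norm_succ hR) (hp_pos.trans hc1) fun i => by
      rw [norm_sub_eq_left_of_norm_lt (hzc i)]
      exact (hc.strictMono_norm_succ hR).monotone (Nat.zero_le i)
  have hsmall : ‖z ^ p / p * deriv F z‖ < ‖z ^ (p - 1) * F z‖ := by
    rw [norm_pow_div_natCast_mul hp, norm_mul, norm_pow, hF, mul_one]
    calc p * ‖z‖ ^ p * ‖deriv F z‖ ≤ p * ‖z‖ ^ p * (1 / ‖c 1‖) := by gcongr
      _ < ‖z‖ ^ p := by
        rw [mul_one_div, mul_comm, mul_div_assoc]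
        exact mul_lt_of_lt_one_right (by positivity) ((div_lt_one (hp_pos.trans hc1)).mpr hc1)
      _ ≤ ‖z‖ ^ (p - 1) := pow_le_pow_of_le_one (norm_nonneg _) hz.le (Nat.sub_le p 1)
  rw [deriv_fc_eq hp hR hc, norm_add_eq_left_of_norm_lt hsmall, norm_mul, norm_pow, hF,
    show fc p c z = z ^ p / p * F z from rfl, norm_pow_div_natCast_mul hp, hF]
  have : ‖z‖ ^ p = ‖z‖ ^ (p - 1) * ‖z‖ := (pow_sub_one_mul (Fact.out : p.Prime).ne_zero _).symm
  rw [this]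
  field_simp

theorem norm_deriv_fc_of_norm_sub_lt (hp : ‖(p : K)‖ = (p : ℝ)⁻¹) (hR : IsRadii p R)
    (hc : InC p R c) {z : K} {k : ℕ} (hz : ‖z - c (k + 1)‖ < R (k + 1)) :
    ‖deriv (fc p c) z‖ = phi p R (R (k + 1)) / R (k + 1) := by
  set F := weierstrassProd fun i => c (i + 1)
  have hp1 : (1 : ℝ) ≤ p := Nat.one_le_cast.mpr (Fact.out : p.Prime).one_le
  have hz' : ‖c (k + 1) - z‖ < ‖c (k + 1)‖ := by rwa [norm_sub_rev, hc.norm_succ]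
  have hzk : ‖z‖ = R (k + 1) := (norm_eq_of_norm_sub_lt hz').trans (hc.norm_succ k)
  have hF' := norm_deriv_weierstrassProd_of_norm_sub_lt (hc.one_le_norm_succ hR)
    (hc.tendsto_norm_succ hR) (hc.strictMono_norm_succ hR) hz'
  have hF := norm_weierstrassProd_lt_of_norm_sub_lt (hc.one_le_norm_succ hR)
    (hc.tendsto_norm_succ hR) (hc.strictMono_norm_succ hR) hz'
  have hzp : 0 < ‖z‖ :=
    (norm_eq_of_norm_sub_lt hz').symm ▸ zero_lt_one.trans_le (hc.one_le_norm_succ hR k)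
  have hlarge : ‖z ^ (p - 1) * F z‖ < ‖z ^ p / p * deriv F z‖ := by
    rw [norm_pow_div_natCast_mul hp, norm_mul, norm_pow]
    calc ‖z‖ ^ (p - 1) * ‖F z‖ < ‖z‖ ^ (p - 1) * (‖z‖ * ‖deriv F z‖) := by gcongr
      _ = ‖z‖ ^ p * ‖deriv F z‖ := by
        rw [← mul_assoc, pow_sub_one_mul (Fact.out : p.Prime).ne_zero]
      _ ≤ p * ‖z‖ ^ p * ‖deriv F z‖ := by
        rw [mul_assoc]; exact le_mul_of_one_le_left (by positivity) hp1
  rw [deriv_fc_eq hp hR hc, norm_add_eq_right_of_norm_lt hlarge, norm_pow_div_natCast_mul hp,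
    hF', hR.phi_apply k, hzk]
  simp only [hc.norm_succ]
  ring

theorem norm_deriv_fc_le_of_forall_le (hp : ‖(p : K)‖ = (p : ℝ)⁻¹) (hR : IsRadii p R)
    (hc : InC p R c) {z : K} (hz1 : 1 ≤ ‖z‖) (hz : ∀ i, R (i + 1) ≤ ‖z - c (i + 1)‖) :
    ‖deriv (fc p c) z‖ ≤ ‖fc p c z‖ / ‖z‖ := by
  set F := weierstrassProd fun i => c (i + 1)
  have hp1 : (1 : ℝ) ≤ p := Nat.one_le_cast.mpr (Fact.out : p.Prime).one_le
  have hzp : 0 < ‖z‖ := zero_lt_one.trans_le hz1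
  have hF' : ‖deriv F z‖ ≤ ‖F z‖ / ‖z‖ := norm_deriv_weierstrassProd_le_div
    (hc.one_le_norm_succ hR) (hc.tendsto_norm_succ hR) hzp fun i => by
      rcases le_or_gt ‖z‖ ‖c (i + 1)‖ with hle | hlt
      · exact hle.trans ((hc.norm_succ i).trans_le ((hz i).trans_eq (norm_sub_rev _ _)))
      · exact (norm_sub_eq_right_of_norm_lt hlt).ge
  have hfc : ‖fc p c z‖ / ‖z‖ = p * (‖z‖ ^ (p - 1) * ‖F z‖) := by
    rw [show fc p c z = z ^ p / p * F z from rfl, norm_pow_div_natCast_mul hp,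
      ← pow_sub_one_mul (Fact.out : p.Prime).ne_zero]
    field_simp
  rw [deriv_fc_eq hp hR hc, hfc]
  refine (IsUltrametricDist.norm_add_le_max _ _).trans (max_le ?_ ?_)
  · rw [norm_mul, norm_pow]
    exact le_mul_of_one_le_left (by positivity) hp1
  · rw [norm_pow_div_natCast_mul hp, ← pow_sub_one_mul (Fact.out : p.Prime).ne_zero]
    calc p * (‖z‖ ^ (p - 1) * ‖z‖) * ‖deriv F z‖
        ≤ p * (‖z‖ ^ (p - 1) * ‖z‖) * (‖F z‖ / ‖z‖) := by gcongr
      _ = p * (‖z‖ ^ (p - 1) * ‖F z‖) := by field_simp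

end DerivFc

/-- **Lemma 4.1** (derivative estimates). `|f_c'(z)| = |f_c(z)|/(p|z|)` on `B_0 \ {0}`,
`|f_c'(z)| = φ(R_j)/R_j` on `B_j` for `j ≥ 1`, and `|f_c'(z)| ≤ |f_c(z)|/|z|` on `A`. -/
theorem deriv_fc
    (p : ℕ) [Fact p.Prime] (K : Type*) [NontriviallyNormedField K] [Algebra ℚ_[p] K]
    (hK : IsCp p K) (R : ℕ → ℝ) (hR : IsGenericRadii p R)
    (c : ℕ → K) (hc : InC p R c) :
    ∀ z : K,
      (z ∈ Bset R c 0 → z ≠ 0 → ‖deriv (fc p c) z‖ = ‖fc p c z‖ / ((p : ℝ) * ‖z‖)) ∧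
      (∀ j, 1 ≤ j → z ∈ Bset R c j → ‖deriv (fc p c) z‖ = phi p R (R j) / R j) ∧
      (z ∈ Aset R c → ‖deriv (fc p c) z‖ ≤ ‖fc p c z‖ / ‖z‖) := by
  have := hK.complete
  have := hK.isUltrametricDist
  have hp := hK.norm_natCast
  intro z
  refine ⟨fun hz hz0 => ?_, fun j hj hz => ?_, fun hz => ?_⟩
  · exact norm_deriv_fc_of_norm_lt_one hp hR.1 hc hz0 (by simpa [Bset] using hz)
  · obtain ⟨k, rfl⟩ := Nat.exists_eq_add_of_le' hj
    exact norm_deriv_fc_of_norm_sub_lt hp hR.1 hc (by simpa [Bset] using hz)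
  · have hB (j : ℕ) : z ∉ Bset R c j := fun hj => hz (Set.mem_iUnion_of_mem j hj)
    exact norm_deriv_fc_le_of_forall_le hp hR.1 hc (by simpa [Bset] using hB 0)
      fun i => by simpa [Bset] using hB (i + 1)

end
end

section
/- Let r = (R_j)_{j≥1} be a generic sequence of radii, c ∈ C(r), and m, k ≥ 1. Suppose z ∈ ℂ_p satisfies f_c^{∘i}(z) ∈ B_0 for 0 ≤ i < m, f_c^{∘(m+i)}(z) ∈ A for 0 ≤ i < n_k, and f_c^{∘(m+n_k)}(z) ∈ B_k. Then every y ∈ ℂ_p with |y − z| < ϱ satisfies the same three conditions, and moreover |(f_c^{∘(m+n_k)})'(z)| < ϱ^{−1}·R_k·p^{−m}, where (f_c^{∘(m+n_k)})' denotes the derivative of the (m+n_k)-th iterate of f_c. -/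
noncomputable section

section WCAux
open Filter Finset

variable {K : Type*} [NormedField K]

lemma wc_na_sub (hna : ∀ x y : K, ‖x + y‖ ≤ max ‖x‖ ‖y‖) (x y : K) :
    ‖x - y‖ ≤ max ‖x‖ ‖y‖ := by
  rw [sub_eq_add_neg]
  simpa using hna x (-y)

lemma wc_na_add_eq (hna : ∀ x y : K, ‖x + y‖ ≤ max ‖x‖ ‖y‖) {x y : K} (h : ‖x‖ < ‖y‖) :
    ‖x + y‖ = ‖y‖ := by
  refine le_antisymm (by simpa [max_eq_right h.le] using hna x y) ?_
  by_contra hlt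
  push_neg at hlt
  have h2 : ‖y‖ ≤ max ‖x + y‖ ‖x‖ := by
    have := hna (x + y) (-x)
    simpa using this
  rcases max_cases ‖x + y‖ ‖x‖ with ⟨h1, _⟩ | ⟨h1, _⟩ <;> rw [h1] at h2 <;> linarith

lemma wc_na_sub_eq (hna : ∀ x y : K, ‖x + y‖ ≤ max ‖x‖ ‖y‖) {x u : K} (h : ‖x‖ < ‖u‖) :
    ‖u - x‖ = ‖u‖ := by
  rw [sub_eq_add_neg, add_comm]
  exact wc_na_add_eq hna (by simpa using h)

lemma wc_na_sum_le (hna : ∀ x y : K, ‖x + y‖ ≤ max ‖x‖ ‖y‖) {ι : Type*} (s : Finset ι)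
    (f : ι → K) (M : ℝ) (hM : 0 ≤ M) (h : ∀ i ∈ s, ‖f i‖ ≤ M) : ‖∑ i ∈ s, f i‖ ≤ M := by
  classical
  induction s using Finset.cons_induction with
  | empty => simpa using hM
  | cons a s ha ih =>
    rw [Finset.sum_cons]
    exact le_trans (hna _ _) (max_le (h a (Finset.mem_cons_self a s))
      (ih fun i hi => h i (Finset.mem_cons_of_mem hi)))

lemma wc_na_prod_sub_le (hna : ∀ x y : K, ‖x + y‖ ≤ max ‖x‖ ‖y‖) {ι : Type*} (s : Finset ι)
    (f g : ι → K) (M : ι → ℝ) (δ : ℝ) (hδ : 0 ≤ δ)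
    (hf : ∀ i ∈ s, ‖f i‖ ≤ M i) (hg : ∀ i ∈ s, ‖g i‖ ≤ M i)
    (hfg : ∀ i ∈ s, ‖f i - g i‖ ≤ δ * M i) :
    ‖∏ i ∈ s, f i - ∏ i ∈ s, g i‖ ≤ δ * ∏ i ∈ s, M i := by
  classical
  induction s using Finset.cons_induction with
  | empty => simpa using hδ
  | cons a s ha ih =>
    have hM : ∀ i ∈ s, 0 ≤ M i := fun i hi =>
      le_trans (norm_nonneg _) (hf i (Finset.mem_cons_of_mem hi))
    have hMa : 0 ≤ M a := le_trans (norm_nonneg _) (hf a (Finset.mem_cons_self a s))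
    have hMs : 0 ≤ ∏ i ∈ s, M i := Finset.prod_nonneg hM
    rw [Finset.prod_cons, Finset.prod_cons, Finset.prod_cons]
    have key : f a * ∏ i ∈ s, f i - g a * ∏ i ∈ s, g i
        = (f a - g a) * ∏ i ∈ s, f i + g a * (∏ i ∈ s, f i - ∏ i ∈ s, g i) := by ring
    rw [key]
    refine le_trans (hna _ _) (max_le ?_ ?_)
    · rw [norm_mul]
      have h1 : ‖∏ i ∈ s, f i‖ ≤ ∏ i ∈ s, M i := by
        rw [norm_prod]
        exact Finset.prod_le_prod (fun i _ => norm_nonneg _)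
          (fun i hi => hf i (Finset.mem_cons_of_mem hi))
      calc ‖f a - g a‖ * ‖∏ i ∈ s, f i‖ ≤ (δ * M a) * ∏ i ∈ s, M i :=
            mul_le_mul (hfg a (Finset.mem_cons_self a s)) h1 (norm_nonneg _)
              (mul_nonneg hδ hMa)
        _ = δ * (M a * ∏ i ∈ s, M i) := by ring
    · rw [norm_mul]
      have h2 : ‖∏ i ∈ s, f i - ∏ i ∈ s, g i‖ ≤ δ * ∏ i ∈ s, M i :=
        ih (fun i hi => hf i (Finset.mem_cons_of_mem hi))
          (fun i hi => hg i (Finset.mem_cons_of_mem hi))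
          (fun i hi => hfg i (Finset.mem_cons_of_mem hi))
      calc ‖g a‖ * ‖∏ i ∈ s, f i - ∏ i ∈ s, g i‖ ≤ M a * (δ * ∏ i ∈ s, M i) :=
            mul_le_mul (hg a (Finset.mem_cons_self a s)) h2 (norm_nonneg _) hMa
        _ = δ * (M a * ∏ i ∈ s, M i) := by ring

lemma wc_norm_tprod_le {f : ℕ → K} (hf : Multipliable f) (B : ℝ)
    (h : ∀ s : Finset ℕ, ∏ i ∈ s, ‖f i‖ ≤ B) : ‖∏' i, f i‖ ≤ B := by
  have ht : Filter.Tendsto (fun s : Finset ℕ => ∏ i ∈ s, f i) Filter.atTop (nhds (∏' i, f i)) :=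
    hf.hasProd
  refine le_of_tendsto ht.norm (Filter.Eventually.of_forall fun s => ?_)
  rw [norm_prod]; exact h s

lemma wc_norm_tprod_eq {f : ℕ → K} (hf : Multipliable f) (s₀ : Finset ℕ) (V : ℝ)
    (h : ∀ s : Finset ℕ, s₀ ⊆ s → ∏ i ∈ s, ‖f i‖ = V) : ‖∏' i, f i‖ = V := by
  have ht : Filter.Tendsto (fun s : Finset ℕ => ∏ i ∈ s, f i) Filter.atTop (nhds (∏' i, f i)) :=
    hf.hasProd
  refine tendsto_nhds_unique ht.norm ?_
  refine Filter.Tendsto.congr' ?_ tendsto_const_nhds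
  filter_upwards [Filter.mem_atTop s₀] with s hs
  rw [norm_prod]
  exact (h s hs).symm

lemma wc_norm_tprod_sub_le {f g : ℕ → K} (hf : Multipliable f) (hg : Multipliable g) (D : ℝ)
    (h : ∀ s : Finset ℕ, ‖∏ i ∈ s, f i - ∏ i ∈ s, g i‖ ≤ D) :
    ‖∏' i, f i - ∏' i, g i‖ ≤ D := by
  have htf : Filter.Tendsto (fun s : Finset ℕ => ∏ i ∈ s, f i) Filter.atTop (nhds (∏' i, f i)) :=
    hf.hasProd
  have htg : Filter.Tendsto (fun s : Finset ℕ => ∏ i ∈ s, g i) Filter.atTop (nhds (∏' i, g i)) :=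
    hg.hasProd
  exact le_of_tendsto (htf.sub htg).norm (Filter.Eventually.of_forall fun s => h s)

end WCAux

section WCAux2
open Filter Finset

lemma wc_cast_pos (p : ℕ) (hp : 2 ≤ p) : (0:ℝ) < p := by
  have : (2:ℝ) ≤ p := by exact_mod_cast hp
  linarith

lemma wc_rho_pos (p : ℕ) (hp : 2 ≤ p) : 0 < rho p :=
  Real.rpow_pos_of_pos (wc_cast_pos p hp) _

lemma wc_rho_lt_one (p : ℕ) (hp : 2 ≤ p) : rho p < 1 := by
  have h1 : (1:ℝ) < p := by
    have : (2:ℝ) ≤ p := by exact_mod_cast hp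
    linarith
  refine Real.rpow_lt_one_of_one_lt_of_neg h1 ?_
  have : (0:ℝ) < (p:ℝ) - 1 := by linarith
  rw [neg_div]
  exact neg_neg_of_pos (by positivity)

lemma wc_rho_pow (p : ℕ) (hp : 2 ≤ p) : rho p ^ (p - 1) = (p:ℝ)⁻¹ := by
  have hp0 : (0:ℝ) < p := wc_cast_pos p hp
  have hcast : ((p - 1 : ℕ) : ℝ) = (p:ℝ) - 1 := by
    have h1 : (1:ℕ) ≤ p := by omega
    push_cast [h1]
    ring
  have hne : (p:ℝ) - 1 ≠ 0 := by
    have : (2:ℝ) ≤ p := by exact_mod_cast hp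
    intro h; linarith
  rw [rho, ← Real.rpow_natCast ((p:ℝ) ^ (-1 / ((p:ℝ) - 1))) (p - 1),
    ← Real.rpow_mul hp0.le, hcast, div_mul_cancel₀ (-1 : ℝ) hne, Real.rpow_neg_one]

lemma wc_p_rho_pow (p : ℕ) (hp : 2 ≤ p) : (p:ℝ) * rho p ^ p = rho p := by
  have h1 : rho p ^ p = rho p ^ (p-1) * rho p := by
    rw [← pow_succ]
    congr 1
    omega
  rw [h1, wc_rho_pow p hp]
  have hne : (p:ℝ) ≠ 0 := ne_of_gt (wc_cast_pos p hp)
  field_simp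

def wcJ (R : ℕ → ℝ) (t : ℝ) : ℕ := sInf {j : ℕ | 1 ≤ j ∧ t ≤ R j}

lemma wc_phi_def (p : ℕ) (R : ℕ → ℝ) (t : ℝ) :
    phi p R t = (p:ℝ) * (∏ i ∈ Finset.Icc 1 (wcJ R t - 1), R i)⁻¹ * t ^ (p + wcJ R t - 1) := rfl

lemma wcJ_spec {R : ℕ → ℝ} (hT : Tendsto R atTop atTop) (t : ℝ) :
    1 ≤ wcJ R t ∧ t ≤ R (wcJ R t) := by
  have hne : {j : ℕ | 1 ≤ j ∧ t ≤ R j}.Nonempty := by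
    obtain ⟨N, hN⟩ := Filter.eventually_atTop.mp (hT.eventually_ge_atTop t)
    exact ⟨max N 1, le_max_right _ _, hN _ (le_max_left _ _)⟩
  exact Nat.sInf_mem hne

lemma wcJ_lt {R : ℕ → ℝ} (t : ℝ) {i : ℕ} (h1 : 1 ≤ i) (h2 : i < wcJ R t) : R i < t := by
  by_contra h
  push_neg at h
  have hmem : i ∈ {j : ℕ | 1 ≤ j ∧ t ≤ R j} := ⟨h1, h⟩
  have h3 : wcJ R t ≤ i := Nat.sInf_le hmem
  omega

def wcH (R : ℕ → ℝ) (t : ℝ) : ℝ := ∏ j ∈ Finset.range (wcJ R t), max 1 (t / R (j+1))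

lemma wc_one_le_prod (s : Finset ℕ) (f : ℕ → ℝ) (h : ∀ i ∈ s, 1 ≤ f i) :
    1 ≤ ∏ i ∈ s, f i := by
  calc (1:ℝ) = ∏ _i ∈ s, 1 := by simp
    _ ≤ ∏ i ∈ s, f i :=
      Finset.prod_le_prod (fun i _ => zero_le_one) (fun i hi => h i hi)

lemma wcH_one_le (R : ℕ → ℝ) (t : ℝ) : 1 ≤ wcH R t :=
  wc_one_le_prod _ _ fun _ _ => le_max_left _ _

section Radii
variable {p : ℕ} {R : ℕ → ℝ} (hp : 2 ≤ p)
  (hinc : ∀ j, 1 ≤ j → R j < R (j + 1)) (hR1 : (p:ℝ) < R 1)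

include hinc in
lemma wc_Rmono : ∀ i j, 1 ≤ i → i ≤ j → R i ≤ R j := by
  intro i j h1 hij
  induction j, hij using Nat.le_induction with
  | base => exact le_refl _
  | succ n hn ih => exact le_trans ih (le_of_lt (hinc n (by omega)))

include hp hinc hR1 in
lemma wc_Rgt : ∀ j, 1 ≤ j → (p:ℝ) < R j := fun j hj =>
  lt_of_lt_of_le hR1 (wc_Rmono hinc 1 j le_rfl hj)

include hp hinc hR1 in
lemma wc_Rpos : ∀ j, 1 ≤ j → (0:ℝ) < R j := fun j hj =>
  lt_trans (wc_cast_pos p hp) (wc_Rgt hp hinc hR1 j hj)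

include hp hinc hR1 in
lemma wc_prodM_le (hT : Tendsto R atTop atTop) (t : ℝ) (s : Finset ℕ) :
    ∏ j ∈ s, max 1 (t / R (j+1)) ≤ wcH R t := by
  classical
  have hone : ∀ j ∉ Finset.range (wcJ R t), max 1 (t / R (j+1)) = 1 := by
    intro j hj
    rw [Finset.mem_range, not_lt] at hj
    have hJ := wcJ_spec hT t
    have h1 : t ≤ R (j+1) := le_trans hJ.2 (wc_Rmono hinc _ _ hJ.1 (by omega))
    have h0 : 0 < R (j+1) := wc_Rpos hp hinc hR1 (j+1) (by omega)
    exact max_eq_left ((div_le_one h0).2 h1)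
  have e1 : ∏ j ∈ s, max 1 (t / R (j+1)) = ∏ j ∈ s ∩ Finset.range (wcJ R t), max 1 (t / R (j+1)) := by
    refine (Finset.prod_subset Finset.inter_subset_left ?_).symm
    intro x hx hnx
    refine hone x fun hr => hnx (Finset.mem_inter.2 ⟨hx, hr⟩)
  rw [e1]
  have hsub : s ∩ Finset.range (wcJ R t) ⊆ Finset.range (wcJ R t) := Finset.inter_subset_right
  rw [wcH, ← Finset.prod_sdiff hsub]
  have hone' : 1 ≤ ∏ j ∈ Finset.range (wcJ R t) \ (s ∩ Finset.range (wcJ R t)), max 1 (t / R (j+1)) :=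
    wc_one_le_prod _ _ fun i _ => le_max_left _ _
  have hnn : 0 ≤ ∏ j ∈ s ∩ Finset.range (wcJ R t), max 1 (t / R (j+1)) :=
    Finset.prod_nonneg fun i _ => le_trans zero_le_one (le_max_left _ _)
  exact le_mul_of_one_le_left hnn hone'

include hp hinc hR1 in
lemma wc_phi_eq (hT : Tendsto R atTop atTop) {t : ℝ} (ht : 0 < t) :
    phi p R t = (p:ℝ) * t ^ p * wcH R t := by
  obtain ⟨hJ1, hJle⟩ := wcJ_spec hT t
  have hlast : max 1 (t / R (wcJ R t)) = 1 :=
    max_eq_left ((div_le_one (wc_Rpos hp hinc hR1 _ hJ1)).2 hJle)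
  have hHt : wcH R t = ∏ j ∈ Finset.range (wcJ R t - 1), (t / R (j+1)) := by
    rw [wcH]
    rw [show wcJ R t = (wcJ R t - 1) + 1 by omega, Finset.prod_range_succ,
      show wcJ R t - 1 + 1 = wcJ R t by omega, hlast, mul_one]
    refine Finset.prod_congr rfl fun j hj => ?_
    rw [Finset.mem_range] at hj
    have hRj : R (j+1) < t := wcJ_lt t (by omega) (by omega)
    have h0 : 0 < R (j+1) := wc_Rpos hp hinc hR1 (j+1) (by omega)
    exact max_eq_right (le_of_lt ((one_lt_div h0).2 hRj))
  have hIcc : ∏ i ∈ Finset.Icc 1 (wcJ R t - 1), R i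
      = ∏ j ∈ Finset.range (wcJ R t - 1), R (j+1) := by
    rw [← Finset.Ico_add_one_right_eq_Icc, Finset.prod_Ico_eq_prod_range]
    simp [add_comm]
  have hpow : t ^ (p + wcJ R t - 1) = t ^ p * t ^ (wcJ R t - 1) := by
    rw [← pow_add]
    congr 1
    omega
  have hRprodpos : (0:ℝ) < ∏ j ∈ Finset.range (wcJ R t - 1), R (j+1) :=
    Finset.prod_pos fun j _ => wc_Rpos hp hinc hR1 (j+1) (by omega)
  rw [wc_phi_def, hIcc, hpow, hHt, Finset.prod_div_distrib, Finset.prod_const,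
    Finset.card_range]
  field_simp

end Radii

section PadicNorm
variable {p : ℕ} [Fact p.Prime] {K : Type*} [NormedField K] [Algebra ℚ_[p] K]

lemma wc_norm_p (hK : IsCp p K) : ‖(p : K)‖ = (p:ℝ)⁻¹ := by
  rw [← map_natCast (algebraMap ℚ_[p] K) p, hK.norm_extends, Padic.norm_p]

lemma wc_norm_nat (hK : IsCp p K) (n : ℕ) : ‖(n : K)‖ ≤ 1 := by
  rw [← map_natCast (algebraMap ℚ_[p] K) n, hK.norm_extends]
  have := Padic.norm_int_le_one (p := p) (n : ℤ)
  simpa using this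

lemma wc_norm_choose (hK : IsCp p K) {i : ℕ} (hi : i ≠ 0) (hip : i < p) :
    ‖(p.choose i : K)‖ ≤ (p:ℝ)⁻¹ := by
  have hdvd : p ∣ p.choose i := (Fact.out : p.Prime).dvd_choose_self hi hip
  obtain ⟨q, hq⟩ := hdvd
  rw [hq]
  push_cast
  rw [norm_mul, wc_norm_p hK]
  calc (p:ℝ)⁻¹ * ‖(q:K)‖ ≤ (p:ℝ)⁻¹ * 1 :=
        mul_le_mul_of_nonneg_left (wc_norm_nat hK q) (by positivity)
    _ = (p:ℝ)⁻¹ := mul_one _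

end PadicNorm

end WCAux2

section WCAux3
open Filter Finset

variable {p : ℕ} [Fact p.Prime] {K : Type*} [NontriviallyNormedField K] [Algebra ℚ_[p] K]
variable {R : ℕ → ℝ} {c : ℕ → K}

lemma wc_hp2 (p : ℕ) [Fact p.Prime] : 2 ≤ p := (Fact.out : p.Prime).two_le

section Ctx
variable (hK : IsCp p K) (hinc : ∀ j, 1 ≤ j → R j < R (j + 1)) (hR1 : (p:ℝ) < R 1)
  (hT : Tendsto R atTop atTop) (hc : InC p R c)

include hK hc hinc hR1 in
lemma wc_factor_norm_le (w : K) (t : ℝ) (hw : ‖w‖ ≤ t) (j : ℕ) :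
    ‖1 - w / c (j + 1)‖ ≤ max 1 (t / R (j + 1)) := by
  have hRp : 0 < R (j+1) := wc_Rpos (wc_hp2 p) hinc hR1 (j+1) (by omega)
  refine le_trans (wc_na_sub hK.isNonarch 1 (w / c (j+1))) ?_
  rw [norm_one, norm_div, hc (j+1) (by omega)]
  have : ‖w‖ / R (j+1) ≤ t / R (j+1) := by gcongr
  exact max_le_max le_rfl this

include hK hinc hR1 hT hc in
lemma wc_mult (w : K) : Multipliable (fun j : ℕ => 1 - w / c (j + 1)) := by
  classical
  haveI : CompleteSpace K := hK.complete
  have hp : 2 ≤ p := wc_hp2 p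
  have hna := hK.isNonarch
  set t := ‖w‖ with htdef
  have ht0 : 0 ≤ t := norm_nonneg w
  set B := wcH R t with hB
  have hB1 : 1 ≤ B := wcH_one_le R t
  have hcauchy : CauchySeq (fun s : Finset ℕ => ∏ j ∈ s, (1 - w / c (j+1))) := by
    rw [Metric.cauchySeq_iff']
    intro ε hε
    set X := B * B * t / ε + 1 with hX
    have hXpos : 0 < X := by
      have h1 : 0 ≤ B * B * t / ε := by positivity
      rw [hX]
      linarith
    obtain ⟨n₀, hn₀⟩ := Filter.eventually_atTop.mp (hT.eventually_ge_atTop X)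
    refine ⟨Finset.range n₀, fun s hs => ?_⟩
    rw [dist_eq_norm]
    have key : (∏ j ∈ s, (1 - w / c (j+1))) - ∏ j ∈ Finset.range n₀, (1 - w / c (j+1))
        = (∏ j ∈ Finset.range n₀, (1 - w / c (j+1)))
          * ((∏ j ∈ s \ Finset.range n₀, (1 - w / c (j+1))) - 1) := by
      rw [mul_sub, mul_one, mul_comm, Finset.prod_sdiff hs]
    rw [key, norm_mul]
    have h1 : ‖∏ j ∈ Finset.range n₀, (1 - w / c (j+1))‖ ≤ B := by
      rw [norm_prod]
      refine le_trans (Finset.prod_le_prod (fun i _ => norm_nonneg _)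
        (fun i _ => wc_factor_norm_le hK hinc hR1 hc w t le_rfl i)) ?_
      exact wc_prodM_le hp hinc hR1 hT t _
    have h2 : ‖(∏ j ∈ s \ Finset.range n₀, (1 - w / c (j+1))) - 1‖ ≤ t / X * B := by
      have hbd := wc_na_prod_sub_le hna (s \ Finset.range n₀)
        (fun j => 1 - w / c (j+1)) (fun _ => 1) (fun j => max 1 (t / R (j+1))) (t / X)
        (by positivity)
        (fun i _ => wc_factor_norm_le hK hinc hR1 hc w t le_rfl i)
        (fun i _ => by rw [norm_one]; exact le_max_left _ _)
        (fun i hi => ?_)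
      · refine le_trans (by simpa using hbd) ?_
        exact mul_le_mul_of_nonneg_left (wc_prodM_le hp hinc hR1 hT t _) (by positivity)
      · have hige : n₀ ≤ i + 1 := by
          rcases Finset.mem_sdiff.1 hi with ⟨_, hir⟩
          rw [Finset.mem_range] at hir
          omega
        have hRX : X ≤ R (i+1) := hn₀ (i+1) hige
        have hRp : 0 < R (i+1) := lt_of_lt_of_le hXpos hRX
        have e1 : (1 - w / c (i+1)) - 1 = -(w / c (i+1)) := by ring
        rw [e1, norm_neg, norm_div, hc (i+1) (by omega)]
        calc t / R (i+1) ≤ t / X := by gcongr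
          _ = t / X * 1 := (mul_one _).symm
          _ ≤ t / X * max 1 (t / R (i+1)) := by
              exact mul_le_mul_of_nonneg_left (le_max_left _ _) (by positivity)
    calc ‖∏ j ∈ Finset.range n₀, (1 - w / c (j+1))‖
          * ‖(∏ j ∈ s \ Finset.range n₀, (1 - w / c (j+1))) - 1‖
        ≤ B * (t / X * B) := by
          refine mul_le_mul h1 h2 (norm_nonneg _) (by linarith)
      _ = B * B * t / X := by field_simp
      _ < ε := by
          rw [div_lt_iff₀ hXpos]
          have he : ε * X = B * B * t + ε := by
            rw [hX]
            field_simp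
          nlinarith [hε]
  obtain ⟨x, hx⟩ := cauchySeq_tendsto_of_complete hcauchy
  exact ⟨x, hx⟩

include hK hinc hR1 hT hc in
lemma wc_gnorm_le (w : K) (t : ℝ) (hw : ‖w‖ ≤ t) :
    ‖∏' j : ℕ, (1 - w / c (j + 1))‖ ≤ wcH R t := by
  refine wc_norm_tprod_le (wc_mult hK hinc hR1 hT hc w) _ fun s => ?_
  refine le_trans (Finset.prod_le_prod (fun i _ => norm_nonneg _)
    (fun i _ => wc_factor_norm_le hK hinc hR1 hc w t hw i)) ?_
  exact wc_prodM_le (wc_hp2 p) hinc hR1 hT t _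

include hK hinc hR1 hT hc in
lemma wc_gnorm_B0 (w : K) (hw : ‖w‖ < 1) :
    ‖∏' j : ℕ, (1 - w / c (j + 1))‖ = 1 := by
  refine wc_norm_tprod_eq (wc_mult hK hinc hR1 hT hc w) ∅ 1 fun s _ => ?_
  refine Finset.prod_eq_one fun j _ => ?_
  have hRp : (p:ℝ) < R (j+1) := wc_Rgt (wc_hp2 p) hinc hR1 (j+1) (by omega)
  have hp2 : (2:ℝ) ≤ p := by exact_mod_cast wc_hp2 p
  have hlt : ‖w / c (j+1)‖ < ‖(1:K)‖ := by
    rw [norm_div, hc (j+1) (by omega), norm_one]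
    have h0 : 0 < R (j+1) := by linarith
    rw [div_lt_one h0]
    linarith [hw]
  simpa using wc_na_sub_eq hK.isNonarch hlt

lemma wc_mem_Aset (w : K) (hw : w ∈ Aset R c) :
    1 ≤ ‖w‖ ∧ ∀ j, 1 ≤ j → R j ≤ ‖w - c j‖ := by
  rw [Aset, Set.mem_compl_iff, Set.mem_iUnion] at hw
  push_neg at hw
  constructor
  · have hB := hw 0
    simp only [Bset, reduceIte] at hB
    simp only [Set.mem_setOf_eq, not_lt] at hB
    exact hB
  · intro j hj
    have hB := hw j
    simp only [Bset] at hB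
    rw [if_neg (by omega : ¬ j = 0)] at hB
    simp only [Set.mem_setOf_eq, not_lt] at hB
    exact hB

include hK hinc hR1 hT hc in
lemma wc_gnorm_A (w : K) (hw : w ∈ Aset R c) :
    ‖∏' j : ℕ, (1 - w / c (j + 1))‖ = wcH R ‖w‖ := by
  classical
  have hp : 2 ≤ p := wc_hp2 p
  have hna := hK.isNonarch
  set t := ‖w‖ with htdef
  obtain ⟨hw1, hwA⟩ := wc_mem_Aset w hw
  have hfac : ∀ j : ℕ, ‖1 - w / c (j+1)‖ = max 1 (t / R (j+1)) := by
    intro j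
    have hRp : 0 < R (j+1) := wc_Rpos hp hinc hR1 (j+1) (by omega)
    have hcn : ‖c (j+1)‖ = R (j+1) := hc (j+1) (by omega)
    have hc0 : c (j+1) ≠ 0 := by
      intro h
      rw [h, norm_zero] at hcn
      linarith
    rcases lt_trichotomy (R (j+1)) t with hlt | heq | hgt
    · have h1 : ‖(1:K)‖ < ‖w / c (j+1)‖ := by
        rw [norm_one, norm_div, hcn, lt_div_iff₀ hRp]
        linarith
      have e1 : (1 : K) - w / c (j+1) = -(w / c (j+1) - 1) := by ring
      rw [e1, norm_neg, wc_na_sub_eq hna h1, norm_div, hcn]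
      exact (max_eq_right (le_of_lt ((one_lt_div hRp).2 hlt))).symm
    · have e1 : (1 : K) - w / c (j+1) = (c (j+1) - w) / c (j+1) := by
        field_simp
      have h2 : ‖c (j+1) - w‖ = R (j+1) := by
        refine le_antisymm ?_ ?_
        · refine le_trans (wc_na_sub hna _ _) ?_
          rw [hcn, ← htdef, ← heq]
          simp
        · rw [← norm_sub_rev]
          exact hwA (j+1) (by omega)
      rw [e1, norm_div, h2, hcn, div_self (ne_of_gt hRp)]
      rw [← heq]
      rw [div_self (ne_of_gt hRp)]
      simp
    · have h1 : ‖w / c (j+1)‖ < ‖(1:K)‖ := by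
        rw [norm_one, norm_div, hcn, div_lt_one hRp]
        exact hgt
      rw [wc_na_sub_eq hna h1, norm_one]
      refine (max_eq_left ?_).symm
      rw [div_le_one hRp]
      linarith
  refine wc_norm_tprod_eq (wc_mult hK hinc hR1 hT hc w) (Finset.range (wcJ R t)) (wcH R t)
    fun s hs => ?_
  have e2 : ∏ j ∈ s, ‖1 - w / c (j+1)‖ = ∏ j ∈ s, max 1 (t / R (j+1)) :=
    Finset.prod_congr rfl fun j _ => hfac j
  rw [e2, wcH]
  refine (Finset.prod_subset hs fun x _ hx => ?_).symm
  rw [Finset.mem_range, not_lt] at hx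
  have hJ := wcJ_spec hT t
  have h1 : t ≤ R (x+1) := le_trans hJ.2 (wc_Rmono hinc _ _ hJ.1 (by omega))
  have h0 : 0 < R (x+1) := wc_Rpos hp hinc hR1 (x+1) (by omega)
  exact max_eq_left ((div_le_one h0).2 h1)

lemma wc_fc_eq (z : K) : fc p c z = z ^ p / (p : K) * ∏' j : ℕ, (1 - z / c (j + 1)) := rfl

include hK in
lemma wc_norm_monomial (z : K) : ‖z ^ p / (p : K)‖ = ‖z‖ ^ p * p := by
  rw [norm_div, norm_pow, wc_norm_p hK, div_eq_mul_inv, inv_inv]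

include hK hinc hR1 hT hc in
lemma wc_fcnorm_B0 (z : K) (hz : ‖z‖ < 1) : ‖fc p c z‖ = (p:ℝ) * ‖z‖ ^ p := by
  rw [wc_fc_eq, norm_mul, wc_norm_monomial hK, wc_gnorm_B0 hK hinc hR1 hT hc z hz, mul_one,
    mul_comm]

include hK hinc hR1 hT hc in
lemma wc_fcnorm_A (z : K) (hz : z ∈ Aset R c) : ‖fc p c z‖ = phi p R ‖z‖ := by
  have h1 : (1:ℝ) ≤ ‖z‖ := (wc_mem_Aset z hz).1
  rw [wc_fc_eq, norm_mul, wc_norm_monomial hK, wc_gnorm_A hK hinc hR1 hT hc z hz,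
    wc_phi_eq (wc_hp2 p) hinc hR1 hT (by linarith : (0:ℝ) < ‖z‖)]
  ring

lemma wc_fc_sub (y z : K) :
    fc p c y - fc p c z
      = (y ^ p - z ^ p) / (p : K) * (∏' j : ℕ, (1 - y / c (j + 1)))
        + z ^ p / (p : K) * ((∏' j : ℕ, (1 - y / c (j + 1))) - ∏' j : ℕ, (1 - z / c (j + 1))) := by
  rw [wc_fc_eq, wc_fc_eq]
  ring

include hK in
lemma wc_pow_sub_pow (y z : K) (t : ℝ) (hz : ‖z‖ ≤ t) (hd : ‖y - z‖ ≤ rho p * t) :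
    ‖y ^ p - z ^ p‖ ≤ (p:ℝ)⁻¹ * t ^ (p - 1) * ‖y - z‖ := by
  have hp : 2 ≤ p := wc_hp2 p
  have hna := hK.isNonarch
  set d := ‖y - z‖ with hdd
  have hd0 : 0 ≤ d := norm_nonneg _
  have ht0 : 0 ≤ t := le_trans (norm_nonneg z) hz
  have hrho0 : 0 < rho p := wc_rho_pos p hp
  have hrho1 : rho p < 1 := wc_rho_lt_one p hp
  have hdt : d ≤ t := le_trans hd (by nlinarith)
  have expand : y ^ p - z ^ p
      = ∑ i ∈ Finset.range p, z ^ i * (y - z) ^ (p - i) * (p.choose i : K) := by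
    have h1 := add_pow z (y - z) p
    rw [add_sub_cancel] at h1
    rw [Finset.sum_range_succ] at h1
    simp only [Nat.choose_self, Nat.cast_one, mul_one, Nat.sub_self, pow_zero] at h1
    rw [h1]
    ring
  rw [expand]
  refine wc_na_sum_le hna _ _ _ (by positivity) ?_
  intro i hi
  rw [Finset.mem_range] at hi
  rw [norm_mul, norm_mul, norm_pow, norm_pow]
  rcases Nat.eq_zero_or_pos i with hi0 | hipos
  · subst hi0
    simp only [pow_zero, one_mul, Nat.choose_zero_right, Nat.cast_one, norm_one, mul_one,
      Nat.sub_zero]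
    have e1 : d ^ p = d ^ (p-1) * d := by
      rw [← pow_succ]
      congr 1
      omega
    rw [e1]
    have e2 : d ^ (p-1) ≤ (rho p * t) ^ (p-1) := pow_le_pow_left₀ hd0 hd _
    have e3 : (rho p * t) ^ (p-1) = (p:ℝ)⁻¹ * t ^ (p-1) := by
      rw [mul_pow, wc_rho_pow p hp]
    calc d ^ (p-1) * d ≤ (rho p * t) ^ (p-1) * d := mul_le_mul_of_nonneg_right e2 hd0
      _ = (p:ℝ)⁻¹ * t ^ (p-1) * d := by rw [e3]
  · have e1 : ‖z‖ ^ i ≤ t ^ i := pow_le_pow_left₀ (norm_nonneg z) hz i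
    have e2 : d ^ (p - i) ≤ t ^ (p - i - 1) * d := by
      have e : d ^ (p - i) = d ^ (p - i - 1) * d := by
        rw [← pow_succ]
        congr 1
        omega
      rw [e]
      exact mul_le_mul_of_nonneg_right (pow_le_pow_left₀ hd0 hdt _) hd0
    have e3 : ‖(p.choose i : K)‖ ≤ (p:ℝ)⁻¹ := wc_norm_choose hK (by omega) hi
    have e4 : t ^ i * t ^ (p - i - 1) = t ^ (p - 1) := by
      rw [← pow_add]
      congr 1
      omega
    calc ‖z‖ ^ i * d ^ (p - i) * ‖(p.choose i : K)‖
        ≤ t ^ i * (t ^ (p - i - 1) * d) * (p:ℝ)⁻¹ := by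
          refine mul_le_mul (mul_le_mul e1 e2 (by positivity) (by positivity)) e3
            (norm_nonneg _) (by positivity)
      _ = (p:ℝ)⁻¹ * t ^ (p - 1) * d := by rw [← e4]; ring

include hK in
lemma wc_pow_sub_pow_crude (y z : K) (hz : ‖z‖ ≤ 1) (hd : ‖y - z‖ ≤ rho p) :
    ‖y ^ p - z ^ p‖ ≤ (p:ℝ)⁻¹ * ‖y - z‖ := by
  have h := wc_pow_sub_pow hK y z 1 hz (by simpa using hd)
  simpa using h

end Ctx
end WCAux3

section WCAux4
open Filter Finset

variable {p : ℕ} [Fact p.Prime] {K : Type*} [NontriviallyNormedField K] [Algebra ℚ_[p] K]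
variable {R : ℕ → ℝ} {c : ℕ → K}

section Ctx2
variable (hK : IsCp p K) (hinc : ∀ j, 1 ≤ j → R j < R (j + 1)) (hR1 : (p:ℝ) < R 1)
  (hT : Tendsto R atTop atTop) (hc : InC p R c)

include hinc hR1 in
lemma wcH_eq_one {t : ℝ} (ht : t ≤ 1) : wcH R t = 1 := by
  have hp : 2 ≤ p := wc_hp2 p
  refine Finset.prod_eq_one fun j _ => ?_
  have hRp : (p:ℝ) < R (j+1) := wc_Rgt hp hinc hR1 (j+1) (by omega)
  have hp2 : (2:ℝ) ≤ p := by exact_mod_cast hp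
  refine max_eq_left ?_
  rw [div_le_one (by linarith)]
  linarith

include hK hinc hR1 hT hc in
lemma wc_gdiff_B0 (y z : K) (t : ℝ) (hy : ‖y‖ ≤ t) (hz : ‖z‖ ≤ t) (ht : t ≤ 1) :
    ‖(∏' j : ℕ, (1 - y / c (j+1))) - ∏' j : ℕ, (1 - z / c (j+1))‖ ≤ ‖y - z‖ / R 1 := by
  have hp : 2 ≤ p := wc_hp2 p
  have hp2 : (2:ℝ) ≤ p := by exact_mod_cast hp
  have hR1pos : 0 < R 1 := wc_Rpos hp hinc hR1 1 le_rfl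
  refine wc_norm_tprod_sub_le (wc_mult hK hinc hR1 hT hc y) (wc_mult hK hinc hR1 hT hc z) _
    fun s => ?_
  have hfy : ∀ i ∈ s, ‖1 - y / c (i+1)‖ ≤ (fun _ : ℕ => (1:ℝ)) i := by
    intro i _
    have h := wc_factor_norm_le hK hinc hR1 hc y t hy i
    have hRp : (p:ℝ) < R (i+1) := wc_Rgt hp hinc hR1 (i+1) (by omega)
    have hmax : max 1 (t / R (i+1)) = 1 := max_eq_left (by
      rw [div_le_one (by linarith)]
      linarith)
    rw [hmax] at h
    exact h
  have hfz : ∀ i ∈ s, ‖1 - z / c (i+1)‖ ≤ (fun _ : ℕ => (1:ℝ)) i := by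
    intro i _
    have h := wc_factor_norm_le hK hinc hR1 hc z t hz i
    have hRp : (p:ℝ) < R (i+1) := wc_Rgt hp hinc hR1 (i+1) (by omega)
    have hmax : max 1 (t / R (i+1)) = 1 := max_eq_left (by
      rw [div_le_one (by linarith)]
      linarith)
    rw [hmax] at h
    exact h
  have hfg : ∀ i ∈ s, ‖(1 - y / c (i+1)) - (1 - z / c (i+1))‖
      ≤ ‖y - z‖ / R 1 * (fun _ : ℕ => (1:ℝ)) i := by
    intro i _
    have hRp : 0 < R (i+1) := wc_Rpos hp hinc hR1 (i+1) (by omega)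
    have e1 : (1 - y / c (i+1)) - (1 - z / c (i+1)) = (z - y) / c (i+1) := by ring
    rw [e1, norm_div, hc (i+1) (by omega), norm_sub_rev]
    simp only [mul_one]
    gcongr
    exact wc_Rmono hinc 1 (i+1) le_rfl (by omega)
  have hbd := wc_na_prod_sub_le hK.isNonarch s _ _ _ _ (by positivity : 0 ≤ ‖y - z‖ / R 1)
    hfy hfz hfg
  simpa using hbd

include hK hinc hR1 hT hc in
lemma wc_gdiff_gen (y z : K) (t : ℝ) (hy : ‖y‖ ≤ t) (hz : ‖z‖ ≤ t) (ht : 0 < t) :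
    ‖(∏' j : ℕ, (1 - y / c (j+1))) - ∏' j : ℕ, (1 - z / c (j+1))‖
      ≤ ‖y - z‖ / t * wcH R t := by
  have hp : 2 ≤ p := wc_hp2 p
  refine wc_norm_tprod_sub_le (wc_mult hK hinc hR1 hT hc y) (wc_mult hK hinc hR1 hT hc z) _
    fun s => ?_
  have hfg : ∀ i ∈ s, ‖(1 - y / c (i+1)) - (1 - z / c (i+1))‖
      ≤ ‖y - z‖ / t * max 1 (t / R (i+1)) := by
    intro i _
    have hRp : 0 < R (i+1) := wc_Rpos hp hinc hR1 (i+1) (by omega)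
    have e1 : (1 - y / c (i+1)) - (1 - z / c (i+1)) = (z - y) / c (i+1) := by ring
    rw [e1, norm_div, hc (i+1) (by omega), norm_sub_rev]
    have e2 : ‖y - z‖ / t * (t / R (i+1)) = ‖y - z‖ / R (i+1) := by
      rw [div_mul_div_comm, mul_comm ‖y - z‖ t, mul_div_mul_left _ _ (ne_of_gt ht)]
    rw [← e2]
    exact mul_le_mul_of_nonneg_left (le_max_right _ _) (by positivity)
  have hbd := wc_na_prod_sub_le hK.isNonarch s (fun j => 1 - y / c (j+1))
    (fun j => 1 - z / c (j+1)) (fun j => max 1 (t / R (j+1))) (‖y - z‖ / t)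
    (by positivity)
    (fun i _ => wc_factor_norm_le hK hinc hR1 hc y t hy i)
    (fun i _ => wc_factor_norm_le hK hinc hR1 hc z t hz i) hfg
  refine le_trans hbd ?_
  exact mul_le_mul_of_nonneg_left (wc_prodM_le hp hinc hR1 hT t s) (by positivity)

include hK hinc hR1 hT hc in
lemma wc_step_B0 (y z : K) (t : ℝ) (hy : ‖y‖ ≤ t) (hz : ‖z‖ ≤ t) (ht : t ≤ 1)
    (hd : ‖y - z‖ ≤ rho p * t) :
    ‖fc p c y - fc p c z‖ ≤ ‖y - z‖ * t ^ (p - 1) := by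
  have hp : 2 ≤ p := wc_hp2 p
  have hp2 : (2:ℝ) ≤ p := by exact_mod_cast hp
  have hpR : (0:ℝ) < p := by linarith
  have hR1pos : 0 < R 1 := wc_Rpos hp hinc hR1 1 le_rfl
  set d := ‖y - z‖ with hdd
  have hd0 : 0 ≤ d := norm_nonneg _
  have ht0 : 0 ≤ t := le_trans (norm_nonneg z) hz
  have hps : t ^ p = t ^ (p-1) * t := by
    rw [← pow_succ]
    congr 1
    omega
  have h1 : ‖y ^ p - z ^ p‖ ≤ (p:ℝ)⁻¹ * t ^ (p-1) * d := wc_pow_sub_pow hK y z t hz hd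
  have h2 : ‖∏' j : ℕ, (1 - y / c (j+1))‖ ≤ 1 := by
    have h := wc_gnorm_le hK hinc hR1 hT hc y t hy
    rwa [wcH_eq_one hinc hR1 ht] at h
  have h3 : ‖(∏' j : ℕ, (1 - y / c (j+1))) - ∏' j : ℕ, (1 - z / c (j+1))‖ ≤ d / R 1 :=
    wc_gdiff_B0 hK hinc hR1 hT hc y z t hy hz ht
  rw [wc_fc_sub]
  refine le_trans (hK.isNonarch _ _) (max_le ?_ ?_)
  · rw [norm_mul, norm_div, wc_norm_p hK, div_eq_mul_inv, inv_inv]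
    calc ‖y ^ p - z ^ p‖ * (p:ℝ) * ‖∏' j : ℕ, (1 - y / c (j+1))‖
        ≤ ((p:ℝ)⁻¹ * t ^ (p-1) * d) * (p:ℝ) * 1 := by
          exact mul_le_mul (mul_le_mul_of_nonneg_right h1 hpR.le) h2 (norm_nonneg _)
            (by positivity)
      _ = d * t ^ (p-1) := by field_simp
  · rw [norm_mul, norm_div, norm_pow, wc_norm_p hK, div_eq_mul_inv, inv_inv]
    calc ‖z‖ ^ p * (p:ℝ) * ‖(∏' j : ℕ, (1 - y / c (j+1))) - ∏' j : ℕ, (1 - z / c (j+1))‖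
        ≤ t ^ p * (p:ℝ) * (d / R 1) := by
          refine mul_le_mul (mul_le_mul_of_nonneg_right
            (pow_le_pow_left₀ (norm_nonneg z) hz p) hpR.le) h3 (norm_nonneg _) (by positivity)
      _ = (d * t ^ (p-1)) * ((p:ℝ) * t / R 1) := by rw [hps]; field_simp
      _ ≤ (d * t ^ (p-1)) * 1 := by
          refine mul_le_mul_of_nonneg_left ?_ (by positivity)
          rw [div_le_one hR1pos]
          nlinarith
      _ = d * t ^ (p-1) := mul_one _

include hK hinc hR1 hT hc in
lemma wc_step_A (y z : K) (t : ℝ) (hy : ‖y‖ ≤ t) (hz : ‖z‖ ≤ t) (ht : 0 < t)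
    (hd : ‖y - z‖ ≤ rho p * t) :
    ‖fc p c y - fc p c z‖ ≤ ‖y - z‖ * (phi p R t / t) := by
  have hp : 2 ≤ p := wc_hp2 p
  have hp2 : (2:ℝ) ≤ p := by exact_mod_cast hp
  have hpR : (0:ℝ) < p := by linarith
  set d := ‖y - z‖ with hdd
  have hd0 : 0 ≤ d := norm_nonneg _
  have hH1 : 1 ≤ wcH R t := wcH_one_le R t
  have hphi : phi p R t = (p:ℝ) * t ^ p * wcH R t := wc_phi_eq hp hinc hR1 hT ht
  have hps : t ^ p = t ^ (p-1) * t := by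
    rw [← pow_succ]
    congr 1
    omega
  have h1 : ‖y ^ p - z ^ p‖ ≤ (p:ℝ)⁻¹ * t ^ (p-1) * d := wc_pow_sub_pow hK y z t hz hd
  have h2 : ‖∏' j : ℕ, (1 - y / c (j+1))‖ ≤ wcH R t := wc_gnorm_le hK hinc hR1 hT hc y t hy
  have h3 : ‖(∏' j : ℕ, (1 - y / c (j+1))) - ∏' j : ℕ, (1 - z / c (j+1))‖
      ≤ d / t * wcH R t := wc_gdiff_gen hK hinc hR1 hT hc y z t hy hz ht
  rw [wc_fc_sub]
  refine le_trans (hK.isNonarch _ _) (max_le ?_ ?_)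
  · rw [norm_mul, norm_div, wc_norm_p hK, div_eq_mul_inv, inv_inv]
    calc ‖y ^ p - z ^ p‖ * (p:ℝ) * ‖∏' j : ℕ, (1 - y / c (j+1))‖
        ≤ ((p:ℝ)⁻¹ * t ^ (p-1) * d) * (p:ℝ) * wcH R t := by
          exact mul_le_mul (mul_le_mul_of_nonneg_right h1 hpR.le) h2 (norm_nonneg _)
            (by positivity)
      _ = d * (t ^ (p-1) * wcH R t) := by field_simp
      _ ≤ d * ((p:ℝ) * t ^ p * wcH R t / t) := by
          refine mul_le_mul_of_nonneg_left ?_ hd0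
          have e : (p:ℝ) * t ^ p * wcH R t / t = (p:ℝ) * (t ^ (p-1) * wcH R t) := by
            rw [hps]; field_simp
          rw [e]
          have hX0 : 0 ≤ t ^ (p-1) * wcH R t := by positivity
          nlinarith
      _ = d * (phi p R t / t) := by rw [hphi]
  · rw [norm_mul, norm_div, norm_pow, wc_norm_p hK, div_eq_mul_inv, inv_inv]
    calc ‖z‖ ^ p * (p:ℝ) * ‖(∏' j : ℕ, (1 - y / c (j+1))) - ∏' j : ℕ, (1 - z / c (j+1))‖
        ≤ t ^ p * (p:ℝ) * (d / t * wcH R t) := by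
          refine mul_le_mul (mul_le_mul_of_nonneg_right
            (pow_le_pow_left₀ (norm_nonneg z) hz p) hpR.le) h3 (norm_nonneg _) (by positivity)
      _ = d * ((p:ℝ) * t ^ p * wcH R t / t) := by field_simp
      _ = d * (phi p R t / t) := by rw [hphi]

include hK hinc hR1 hT hc in
lemma wc_step_crude (y z : K) (hz : ‖z‖ < 1) (hd : ‖y - z‖ < rho p) :
    ‖fc p c y - fc p c z‖ ≤ ‖y - z‖ := by
  have hp : 2 ≤ p := wc_hp2 p
  have hp2 : (2:ℝ) ≤ p := by exact_mod_cast hp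
  have hpR : (0:ℝ) < p := by linarith
  have hrho1 : rho p < 1 := wc_rho_lt_one p hp
  have hrho0 : 0 < rho p := wc_rho_pos p hp
  have hR1pos : 0 < R 1 := wc_Rpos hp hinc hR1 1 le_rfl
  set d := ‖y - z‖ with hdd
  have hd0 : 0 ≤ d := norm_nonneg _
  have hy1 : ‖y‖ < 1 := by
    have e : y = (y - z) + z := by ring
    rw [e]
    exact lt_of_le_of_lt (hK.isNonarch _ _) (max_lt (lt_trans hd hrho1) hz)
  have h1 : ‖y ^ p - z ^ p‖ ≤ (p:ℝ)⁻¹ * d := wc_pow_sub_pow_crude hK y z hz.le (le_trans hd.le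
    (by nlinarith [wc_rho_lt_one p hp]))
  have h2 : ‖∏' j : ℕ, (1 - y / c (j+1))‖ ≤ 1 := by
    have h := wc_gnorm_le hK hinc hR1 hT hc y 1 hy1.le
    rwa [wcH_eq_one hinc hR1 le_rfl] at h
  have h3 : ‖(∏' j : ℕ, (1 - y / c (j+1))) - ∏' j : ℕ, (1 - z / c (j+1))‖ ≤ d / R 1 :=
    wc_gdiff_B0 hK hinc hR1 hT hc y z 1 hy1.le hz.le le_rfl
  rw [wc_fc_sub]
  refine le_trans (hK.isNonarch _ _) (max_le ?_ ?_)
  · rw [norm_mul, norm_div, wc_norm_p hK, div_eq_mul_inv, inv_inv]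
    calc ‖y ^ p - z ^ p‖ * (p:ℝ) * ‖∏' j : ℕ, (1 - y / c (j+1))‖
        ≤ ((p:ℝ)⁻¹ * d) * (p:ℝ) * 1 := by
          exact mul_le_mul (mul_le_mul_of_nonneg_right h1 hpR.le) h2 (norm_nonneg _)
            (by positivity)
      _ = d := by field_simp
  · rw [norm_mul, norm_div, norm_pow, wc_norm_p hK, div_eq_mul_inv, inv_inv]
    calc ‖z‖ ^ p * (p:ℝ) * ‖(∏' j : ℕ, (1 - y / c (j+1))) - ∏' j : ℕ, (1 - z / c (j+1))‖
        ≤ 1 * (p:ℝ) * (d / R 1) := by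
          refine mul_le_mul (mul_le_mul_of_nonneg_right
            (pow_le_one₀ (norm_nonneg z) hz.le) hpR.le) h3 (norm_nonneg _) (by positivity)
      _ = d * ((p:ℝ) / R 1) := by ring
      _ ≤ d * 1 := by
          refine mul_le_mul_of_nonneg_left ?_ hd0
          rw [div_le_one hR1pos]
          linarith
      _ = d := mul_one _

include hK hc in
lemma wc_A_transfer (y w : K) (hw : w ∈ Aset R c) (hd : ‖y - w‖ < ‖w‖) :
    y ∈ Aset R c ∧ ‖y‖ = ‖w‖ := by
  obtain ⟨hw1, hwA⟩ := wc_mem_Aset w hw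
  have hna := hK.isNonarch
  have hyw : ‖y‖ = ‖w‖ := by
    have e : y = (y - w) + w := by ring
    rw [e]
    exact wc_na_add_eq hna hd
  refine ⟨?_, hyw⟩
  rw [Aset, Set.mem_compl_iff]
  intro hmem
  obtain ⟨j, hj⟩ := Set.mem_iUnion.1 hmem
  rcases Nat.eq_zero_or_pos j with hj0 | hjpos
  · subst hj0
    simp only [Bset, reduceIte, Set.mem_setOf_eq] at hj
    rw [hyw] at hj
    linarith
  · have hj' : ‖y - c j‖ < R j := by
      simp only [Bset] at hj
      rw [if_neg (by omega : ¬ j = 0)] at hj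
      exact hj
    have hcj : ‖c j‖ = R j := hc j (by omega)
    have hge : ‖w‖ ≤ ‖w - c j‖ := by
      rcases lt_or_ge ‖c j‖ ‖w‖ with hlt | hle
      · rw [wc_na_sub_eq hna hlt]
      · exact le_trans hle (by rw [hcj]; exact hwA j (by omega))
    have heq : ‖y - c j‖ = ‖w - c j‖ := by
      have e : y - c j = (y - w) + (w - c j) := by ring
      rw [e]
      exact wc_na_add_eq hna (lt_of_lt_of_le hd hge)
    rw [heq] at hj'
    have := hwA j (by omega)
    linarith

include hK hc in
lemma wc_norm_of_mem_Bk (w : K) (k : ℕ) (hk : 1 ≤ k) (hw : w ∈ Bset R c k) :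
    ‖w‖ = R k ∧ ‖w - c k‖ < R k := by
  have hmem : ‖w - c k‖ < R k := by
    simp only [Bset] at hw
    rw [if_neg (by omega : ¬ k = 0)] at hw
    exact hw
  have hcn : ‖c k‖ = R k := hc k hk
  refine ⟨?_, hmem⟩
  have e : w = (w - c k) + c k := by ring
  rw [e, wc_na_add_eq hK.isNonarch (by rw [hcn]; exact hmem), hcn]

lemma wc_mem_B0 (w : K) : w ∈ Bset R c 0 ↔ ‖w‖ < 1 := by
  simp only [Bset, reduceIte, Set.mem_setOf_eq]

end Ctx2
end WCAux4

set_option maxHeartbeats 1600000 in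
/-- **Lemma 4.2.** If `z` has initial itinerary `B_0^m A^{n_k} B_k` under `f_c`, then so
does every `y` with `|y - z| < ϱ`, and `|(f_c^{∘(m+n_k)})'(z)| < ϱ⁻¹ R_k p^{-m}`. -/
theorem wild_contraction
    (p : ℕ) [Fact p.Prime] (K : Type*) [NontriviallyNormedField K] [Algebra ℚ_[p] K]
    (hK : IsCp p K) (R : ℕ → ℝ) (hR : IsGenericRadii p R)
    (c : ℕ → K) (hc : InC p R c)
    (m k : ℕ) (hm : 1 ≤ m) (hk : 1 ≤ k) (z : K)
    (hz0 : ∀ i, i < m → (fc p c)^[i] z ∈ Bset R c 0)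
    (hzA : ∀ i, i < nseq p R k → (fc p c)^[m + i] z ∈ Aset R c)
    (hzk : (fc p c)^[m + nseq p R k] z ∈ Bset R c k) :
    (∀ y : K, ‖y - z‖ < rho p →
      (∀ i, i < m → (fc p c)^[i] y ∈ Bset R c 0) ∧
      (∀ i, i < nseq p R k → (fc p c)^[m + i] y ∈ Aset R c) ∧
      (fc p c)^[m + nseq p R k] y ∈ Bset R c k) ∧
    ‖deriv ((fc p c)^[m + nseq p R k]) z‖ < (rho p)⁻¹ * R k * ((p : ℝ) ^ m)⁻¹ := by
  classical
  obtain ⟨⟨hinc, hR1, hT⟩, _hgen⟩ := hR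
  have hp : 2 ≤ p := wc_hp2 p
  have hp2 : (2:ℝ) ≤ p := by exact_mod_cast hp
  have hpR : (0:ℝ) < p := by linarith
  have hrho0 : 0 < rho p := wc_rho_pos p hp
  have hrho1 : rho p < 1 := wc_rho_lt_one p hp
  have hna := hK.isNonarch
  set n := nseq p R k with hn
  have hzlt : ∀ i, i < m → ‖(fc p c)^[i] z‖ < 1 := by
    intro i hi
    exact (wc_mem_B0 _).1 (hz0 i hi)
  have hrec : ∀ i, i < m → ‖(fc p c)^[i+1] z‖ = (p:ℝ) * ‖(fc p c)^[i] z‖ ^ p := by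
    intro i hi
    rw [Function.iterate_succ_apply']
    exact wc_fcnorm_B0 hK hinc hR1 hT hc _ (hzlt i hi)
  rcases Nat.eq_zero_or_pos n with hn0 | hnpos
  · -- contradiction: n = 0 impossible
    exfalso
    have hzk' := hzk
    rw [hn0, Nat.add_zero] at hzk'
    have hBk := wc_norm_of_mem_Bk hK hc _ k hk hzk'
    have hRk : (p:ℝ) < R k := wc_Rgt hp hinc hR1 k hk
    have hm1 : m - 1 < m := by omega
    have h2 : ‖(fc p c)^[m] z‖ = (p:ℝ) * ‖(fc p c)^[m-1] z‖ ^ p := by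
      conv_lhs => rw [show m = (m-1) + 1 by omega]
      exact hrec (m-1) hm1
    have h3 : ‖(fc p c)^[m-1] z‖ < 1 := hzlt (m-1) hm1
    have h4 : ‖(fc p c)^[m-1] z‖ ^ p < 1 := pow_lt_one₀ (norm_nonneg _) h3 (by omega)
    have h5 : ‖(fc p c)^[m] z‖ < (p:ℝ) := by nlinarith [h2]
    rw [hBk.1] at h5
    linarith
  have hAz : ∀ i, i < n → (fc p c)^[m+i] z ∈ Aset R c := fun i hi => hzA i hi
  have hA1 : ∀ i, i < n → 1 ≤ ‖(fc p c)^[m+i] z‖ := fun i hi => (wc_mem_Aset _ (hAz i hi)).1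
  have htm : (1:ℝ) ≤ ‖(fc p c)^[m] z‖ := by
    have := hA1 0 hnpos
    simpa using this
  -- all B0-phase norms exceed rho
  have hgt : ∀ i, i < m → rho p < ‖(fc p c)^[i] z‖ := by
    intro i hi
    by_contra hle
    push_neg at hle
    have chain : ∀ j, i + j ≤ m - 1 → ‖(fc p c)^[i+j] z‖ ≤ rho p := by
      intro j
      induction j with
      | zero => intro _; simpa using hle
      | succ j ih =>
        intro hj
        have h1 : i + j < m := by omega
        have h2 := ih (by omega)
        have h3 : ‖(fc p c)^[i+j] z‖ ^ p ≤ rho p ^ p :=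
          pow_le_pow_left₀ (norm_nonneg _) h2 p
        rw [show i + (j+1) = (i+j) + 1 by omega, hrec (i+j) h1]
        calc (p:ℝ) * ‖(fc p c)^[i+j] z‖ ^ p ≤ (p:ℝ) * rho p ^ p := by nlinarith
          _ = rho p := wc_p_rho_pow p hp
    have hlast : ‖(fc p c)^[m-1] z‖ ≤ rho p := by
      have := chain (m - 1 - i) (by omega)
      rwa [show i + (m-1-i) = m-1 by omega] at this
    have h3 : ‖(fc p c)^[m-1] z‖ ^ p ≤ rho p ^ p := pow_le_pow_left₀ (norm_nonneg _) hlast p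
    have h4 : ‖(fc p c)^[m] z‖ ≤ rho p := by
      have hm' : ‖(fc p c)^[m] z‖ = (p:ℝ) * ‖(fc p c)^[m-1] z‖ ^ p := by
        conv_lhs => rw [show m = (m-1)+1 by omega]
        exact hrec (m-1) (by omega)
      rw [hm']
      calc (p:ℝ) * ‖(fc p c)^[m-1] z‖ ^ p ≤ (p:ℝ) * rho p ^ p := by nlinarith
        _ = rho p := wc_p_rho_pow p hp
    linarith
  constructor
  · -- PART 1
    intro y hy
    have main1 : ∀ i, i ≤ m → ‖(fc p c)^[i] y - (fc p c)^[i] z‖ < rho p := by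
      intro i
      induction i with
      | zero => intro _; simpa using hy
      | succ i ih =>
        intro hi
        have h1 := ih (by omega)
        rw [Function.iterate_succ_apply', Function.iterate_succ_apply']
        exact lt_of_le_of_lt
          (wc_step_crude hK hinc hR1 hT hc _ _ (hzlt i (by omega)) h1) h1
    have part1a : ∀ i, i < m → (fc p c)^[i] y ∈ Bset R c 0 := by
      intro i hi
      rw [wc_mem_B0]
      have e : (fc p c)^[i] y = ((fc p c)^[i] y - (fc p c)^[i] z) + (fc p c)^[i] z := by ring
      rw [e]
      exact lt_of_le_of_lt (hna _ _) (max_lt (lt_trans (main1 i hi.le) hrho1) (hzlt i hi))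
    have main2 : ∀ i, i ≤ n →
        ‖(fc p c)^[m+i] y - (fc p c)^[m+i] z‖ < rho p * ‖(fc p c)^[m+i] z‖ := by
      intro i
      induction i with
      | zero =>
        intro _
        have h1 : ‖(fc p c)^[m] y - (fc p c)^[m] z‖ < rho p := main1 m le_rfl
        have h2 : rho p ≤ rho p * ‖(fc p c)^[m] z‖ := by nlinarith [htm]
        simpa using lt_of_lt_of_le h1 h2
      | succ i ih =>
        intro hi
        have hi' : i < n := by omega
        have h1 := ih hi'.le
        have ht1 : 1 ≤ ‖(fc p c)^[m+i] z‖ := hA1 i hi'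
        have ht0 : (0:ℝ) < ‖(fc p c)^[m+i] z‖ := by linarith
        have hyle : ‖(fc p c)^[m+i] y‖ ≤ ‖(fc p c)^[m+i] z‖ := by
          have e : (fc p c)^[m+i] y
              = ((fc p c)^[m+i] y - (fc p c)^[m+i] z) + (fc p c)^[m+i] z := by ring
          rw [e]
          refine le_trans (hna _ _) (max_le ?_ le_rfl)
          nlinarith [h1]
        have hstep := wc_step_A hK hinc hR1 hT hc ((fc p c)^[m+i] y) ((fc p c)^[m+i] z)
          ‖(fc p c)^[m+i] z‖ hyle le_rfl ht0 (le_of_lt h1)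
        have hphit : 0 < phi p R ‖(fc p c)^[m+i] z‖ / ‖(fc p c)^[m+i] z‖ := by
          rw [wc_phi_eq hp hinc hR1 hT ht0]
          have hH := wcH_one_le R ‖(fc p c)^[m+i] z‖
          have htp : (0:ℝ) < ‖(fc p c)^[m+i] z‖ ^ p := by positivity
          have hnum : (0:ℝ) < (p:ℝ) * ‖(fc p c)^[m+i] z‖ ^ p * wcH R ‖(fc p c)^[m+i] z‖ :=
            mul_pos (mul_pos hpR htp) (by linarith)
          exact div_pos hnum ht0
        have hnorm : ‖fc p c ((fc p c)^[m+i] z)‖ = phi p R ‖(fc p c)^[m+i] z‖ :=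
          wc_fcnorm_A hK hinc hR1 hT hc _ (hAz i hi')
        rw [show m + (i+1) = (m+i) + 1 by omega, Function.iterate_succ_apply',
          Function.iterate_succ_apply', hnorm]
        calc ‖fc p c ((fc p c)^[m+i] y) - fc p c ((fc p c)^[m+i] z)‖
            ≤ ‖(fc p c)^[m+i] y - (fc p c)^[m+i] z‖
              * (phi p R ‖(fc p c)^[m+i] z‖ / ‖(fc p c)^[m+i] z‖) := hstep
          _ < (rho p * ‖(fc p c)^[m+i] z‖)
              * (phi p R ‖(fc p c)^[m+i] z‖ / ‖(fc p c)^[m+i] z‖) :=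
              mul_lt_mul_of_pos_right h1 hphit
          _ = rho p * phi p R ‖(fc p c)^[m+i] z‖ := by
              rw [mul_assoc, mul_div_assoc', mul_div_cancel_left₀ _ (ne_of_gt ht0)]
    have part1b : ∀ i, i < n → (fc p c)^[m+i] y ∈ Aset R c := by
      intro i hi
      have ht1 : 1 ≤ ‖(fc p c)^[m+i] z‖ := hA1 i hi
      have hd := main2 i hi.le
      refine (wc_A_transfer hK hc _ _ (hAz i hi) ?_).1
      calc ‖(fc p c)^[m+i] y - (fc p c)^[m+i] z‖ < rho p * ‖(fc p c)^[m+i] z‖ := hd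
        _ < 1 * ‖(fc p c)^[m+i] z‖ := by nlinarith
        _ = ‖(fc p c)^[m+i] z‖ := one_mul _
    have part1c : (fc p c)^[m+n] y ∈ Bset R c k := by
      have hBk := wc_norm_of_mem_Bk hK hc _ k hk hzk
      have hdN := main2 n le_rfl
      rw [hBk.1] at hdN
      have hRk0 : 0 < R k := wc_Rpos hp hinc hR1 k hk
      simp only [Bset]
      rw [if_neg (by omega : ¬ k = 0)]
      have e : (fc p c)^[m+n] y - c k
          = ((fc p c)^[m+n] y - (fc p c)^[m+n] z) + ((fc p c)^[m+n] z - c k) := by ring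
      show ‖(fc p c)^[m+n] y - c k‖ < R k
      rw [e]
      refine lt_of_le_of_lt (hna _ _) (max_lt ?_ hBk.2)
      nlinarith [hdN]
    exact ⟨part1a, part1b, part1c⟩
  · -- PART 2
    have hRk0 : 0 < R k := wc_Rpos hp hinc hR1 k hk
    have hRHS : 0 < (rho p)⁻¹ * R k * ((p:ℝ)^m)⁻¹ := by positivity
    by_cases hdiff : DifferentiableAt K ((fc p c)^[m + n]) z
    · have ht0 : rho p < ‖z‖ := by
        have := hgt 0 (by omega)
        simpa using this
      have ht0pos : (0:ℝ) < ‖z‖ := lt_trans hrho0 ht0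
      set C := ((p:ℝ)^m)⁻¹ * R k / ‖z‖ with hC
      have key : ∀ y : K, ‖y - z‖ < rho p ^ 2 →
          ‖(fc p c)^[m+n] y - (fc p c)^[m+n] z‖ ≤ ‖y - z‖ * C := by
        intro y hy
        have hfrac : ∀ N : ℕ, ‖y - z‖ * ((p:ℝ)^N)⁻¹ / ‖z‖ ≤ rho p := by
          intro N
          have hpN : (1:ℝ) ≤ (p:ℝ)^N := one_le_pow₀ (by linarith)
          have hinv : ((p:ℝ)^N)⁻¹ ≤ 1 := by
            rw [← one_div]
            exact (div_le_one (by positivity)).2 hpN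
          rw [div_le_iff₀ ht0pos]
          have h1 : ‖y - z‖ * ((p:ℝ)^N)⁻¹ ≤ ‖y - z‖ :=
            mul_le_of_le_one_right (norm_nonneg _) hinv
          nlinarith [hy, hrho0, ht0, norm_nonneg (y - z)]
        have claim1 : ∀ i, i ≤ m → ‖(fc p c)^[i] y - (fc p c)^[i] z‖
            ≤ ‖y - z‖ * ((p:ℝ)^i)⁻¹ * ‖(fc p c)^[i] z‖ / ‖z‖ := by
          intro i
          induction i with
          | zero =>
            intro _
            simp only [Function.iterate_zero_apply, pow_zero, inv_one, mul_one]
            rw [mul_div_assoc, div_self ht0pos.ne', mul_one]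
          | succ i ih =>
            intro hi
            have hi' : i < m := by omega
            have h1 := ih (by omega)
            have htiρ : rho p < ‖(fc p c)^[i] z‖ := hgt i hi'
            have hti1 : ‖(fc p c)^[i] z‖ < 1 := hzlt i hi'
            have htipos : (0:ℝ) < ‖(fc p c)^[i] z‖ := lt_trans hrho0 htiρ
            have hdle : ‖(fc p c)^[i] y - (fc p c)^[i] z‖
                ≤ rho p * ‖(fc p c)^[i] z‖ := by
              refine le_trans h1 ?_
              have e : ‖y - z‖ * ((p:ℝ)^i)⁻¹ * ‖(fc p c)^[i] z‖ / ‖z‖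
                  = (‖y - z‖ * ((p:ℝ)^i)⁻¹ / ‖z‖) * ‖(fc p c)^[i] z‖ := by ring
              rw [e]
              exact mul_le_mul_of_nonneg_right (hfrac i) (norm_nonneg _)
            have hyle : ‖(fc p c)^[i] y‖ ≤ ‖(fc p c)^[i] z‖ := by
              have e : (fc p c)^[i] y
                  = ((fc p c)^[i] y - (fc p c)^[i] z) + (fc p c)^[i] z := by ring
              rw [e]
              refine le_trans (hna _ _) (max_le ?_ le_rfl)
              nlinarith [hdle, htipos, hrho1]
            have hstep := wc_step_B0 hK hinc hR1 hT hc ((fc p c)^[i] y) ((fc p c)^[i] z)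
              ‖(fc p c)^[i] z‖ hyle le_rfl hti1.le hdle
            have hnext : ‖fc p c ((fc p c)^[i] z)‖ = (p:ℝ) * ‖(fc p c)^[i] z‖ ^ p :=
              wc_fcnorm_B0 hK hinc hR1 hT hc _ hti1
            rw [Function.iterate_succ_apply', Function.iterate_succ_apply', hnext]
            refine le_trans hstep ?_
            have hps : ‖(fc p c)^[i] z‖ ^ p = ‖(fc p c)^[i] z‖ ^ (p-1) * ‖(fc p c)^[i] z‖ := by
              rw [← pow_succ]
              congr 1
              omega
            calc ‖(fc p c)^[i] y - (fc p c)^[i] z‖ * ‖(fc p c)^[i] z‖ ^ (p-1)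
                ≤ (‖y - z‖ * ((p:ℝ)^i)⁻¹ * ‖(fc p c)^[i] z‖ / ‖z‖)
                  * ‖(fc p c)^[i] z‖ ^ (p-1) :=
                  mul_le_mul_of_nonneg_right h1 (by positivity)
              _ = ‖y - z‖ * ((p:ℝ)^(i+1))⁻¹ * ((p:ℝ) * ‖(fc p c)^[i] z‖ ^ p) / ‖z‖ := by
                  rw [hps, pow_succ]
                  field_simp
        have claim2 : ∀ i, i ≤ n → ‖(fc p c)^[m+i] y - (fc p c)^[m+i] z‖
            ≤ ‖y - z‖ * ((p:ℝ)^m)⁻¹ * ‖(fc p c)^[m+i] z‖ / ‖z‖ := by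
          intro i
          induction i with
          | zero =>
            intro _
            simpa using claim1 m le_rfl
          | succ i ih =>
            intro hi
            have hi' : i < n := by omega
            have h1 := ih (by omega)
            have ht1 : 1 ≤ ‖(fc p c)^[m+i] z‖ := hA1 i hi'
            have htpos : (0:ℝ) < ‖(fc p c)^[m+i] z‖ := by linarith
            have hdle : ‖(fc p c)^[m+i] y - (fc p c)^[m+i] z‖
                ≤ rho p * ‖(fc p c)^[m+i] z‖ := by
              refine le_trans h1 ?_
              have e : ‖y - z‖ * ((p:ℝ)^m)⁻¹ * ‖(fc p c)^[m+i] z‖ / ‖z‖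
                  = (‖y - z‖ * ((p:ℝ)^m)⁻¹ / ‖z‖) * ‖(fc p c)^[m+i] z‖ := by ring
              rw [e]
              exact mul_le_mul_of_nonneg_right (hfrac m) (norm_nonneg _)
            have hyle : ‖(fc p c)^[m+i] y‖ ≤ ‖(fc p c)^[m+i] z‖ := by
              have e : (fc p c)^[m+i] y
                  = ((fc p c)^[m+i] y - (fc p c)^[m+i] z) + (fc p c)^[m+i] z := by ring
              rw [e]
              refine le_trans (hna _ _) (max_le ?_ le_rfl)
              nlinarith [hdle, htpos, hrho1]
            have hstep := wc_step_A hK hinc hR1 hT hc ((fc p c)^[m+i] y) ((fc p c)^[m+i] z)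
              ‖(fc p c)^[m+i] z‖ hyle le_rfl htpos hdle
            have hnext : ‖fc p c ((fc p c)^[m+i] z)‖ = phi p R ‖(fc p c)^[m+i] z‖ :=
              wc_fcnorm_A hK hinc hR1 hT hc _ (hAz i hi')
            have hphinn : 0 ≤ phi p R ‖(fc p c)^[m+i] z‖ / ‖(fc p c)^[m+i] z‖ := by
              rw [wc_phi_eq hp hinc hR1 hT htpos]
              have hH := wcH_one_le R ‖(fc p c)^[m+i] z‖
              positivity
            rw [show m + (i+1) = (m+i) + 1 by omega, Function.iterate_succ_apply',
              Function.iterate_succ_apply', hnext]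
            refine le_trans hstep ?_
            calc ‖(fc p c)^[m+i] y - (fc p c)^[m+i] z‖
                  * (phi p R ‖(fc p c)^[m+i] z‖ / ‖(fc p c)^[m+i] z‖)
                ≤ (‖y - z‖ * ((p:ℝ)^m)⁻¹ * ‖(fc p c)^[m+i] z‖ / ‖z‖)
                  * (phi p R ‖(fc p c)^[m+i] z‖ / ‖(fc p c)^[m+i] z‖) :=
                  mul_le_mul_of_nonneg_right h1 hphinn
              _ = ‖y - z‖ * ((p:ℝ)^m)⁻¹ * phi p R ‖(fc p c)^[m+i] z‖ / ‖z‖ := by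
                  field_simp
        have hfin := claim2 n le_rfl
        have hZN : ‖(fc p c)^[m+n] z‖ = R k := (wc_norm_of_mem_Bk hK hc _ k hk hzk).1
        rw [hZN] at hfin
        calc ‖(fc p c)^[m+n] y - (fc p c)^[m+n] z‖
            ≤ ‖y - z‖ * ((p:ℝ)^m)⁻¹ * R k / ‖z‖ := hfin
          _ = ‖y - z‖ * C := by rw [hC]; ring
      have hC_lt : C < (rho p)⁻¹ * R k * ((p:ℝ)^m)⁻¹ := by
        rw [hC]
        have h1 : (1:ℝ) / ‖z‖ < 1 / rho p := by
          rw [div_lt_div_iff₀ ht0pos hrho0]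
          nlinarith
        have h2 : (0:ℝ) < ((p:ℝ)^m)⁻¹ * R k := by positivity
        calc ((p:ℝ)^m)⁻¹ * R k / ‖z‖ = (((p:ℝ)^m)⁻¹ * R k) * (1 / ‖z‖) := by ring
          _ < (((p:ℝ)^m)⁻¹ * R k) * (1 / rho p) := by
              exact mul_lt_mul_of_pos_left h1 h2
          _ = (rho p)⁻¹ * R k * ((p:ℝ)^m)⁻¹ := by rw [one_div]; ring
      have hder := hdiff.hasDerivAt
      rw [hasDerivAt_iff_tendsto_slope] at hder
      have hbound : ∀ᶠ y in nhdsWithin z {z}ᶜ, ‖slope ((fc p c)^[m+n]) z y‖ ≤ C := by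
        filter_upwards [self_mem_nhdsWithin,
          mem_nhdsWithin_of_mem_nhds (Metric.ball_mem_nhds z (by positivity : (0:ℝ) < rho p ^ 2))]
          with y hy1 hy2
        have hyz : y ≠ z := hy1
        have hdist : ‖y - z‖ < rho p ^ 2 := by
          rw [← dist_eq_norm]
          exact Metric.mem_ball.1 hy2
        have hk2 := key y hdist
        have hyz0 : (0:ℝ) < ‖y - z‖ := by
          rw [norm_pos_iff]
          exact sub_ne_zero.2 hyz
        rw [slope_def_field, norm_div, div_le_iff₀ hyz0]
        calc ‖(fc p c)^[m+n] y - (fc p c)^[m+n] z‖ ≤ ‖y - z‖ * C := hk2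
          _ = C * ‖y - z‖ := mul_comm _ _
      have hfinal : ‖deriv ((fc p c)^[m+n]) z‖ ≤ C := le_of_tendsto hder.norm hbound
      exact lt_of_le_of_lt hfinal hC_lt
    · rw [deriv_zero_of_not_differentiableAt hdiff, norm_zero]
      exact hRHS
end
end

section
/- Let r = (R_j)_{j≥1} be a generic sequence of radii, c ∈ C(r), and j ≥ 1. Then for every z ∈ ℂ_p with |z| < R_j, |∂_j f_c(z)| = |z|·|f_c(z)|/R_j², where ∂_j f_c(z) denotes the derivative at t = c_j of the function t ↦ f_{c(t)}(z), c(t) being the sequence obtained from c by replacing its j-th entry c_j with t. -/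
noncomputable section

/-!
Only the factor `1 - z / c_j` of `f_c(z)` depends on `c_j`, so `t ↦ f_{c(t)}(z)` is
`t ↦ (1 - z / t) · A` with `A` independent of `t`, and its derivative at `c_j` is
`z / c_j² · A`. Since `|z| < R_j = |c_j|`, the ultrametric inequality gives `|1 - z / c_j| = 1`,
so `|f_c(z)| = |A|` and the formula follows. The only analytic input is that the infinite product
converges, which in a complete ultrametric field holds as soon as the factors tend to `1`.
-/

open Filter Topology Function Bornology

namespace IsUltrametricDist

variable {K ι : Type*} [NormedField K] [IsUltrametricDist K]

lemma norm_le_one_of_norm_sub_one_le {x : K} (hx : ‖x - 1‖ ≤ 1) : ‖x‖ ≤ 1 := by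
  simpa using (norm_add_one_le_max_norm_one (x - 1)).trans (max_le hx le_rfl)

lemma norm_one_sub_of_norm_lt_one {w : K} (hw : ‖w‖ < 1) : ‖1 - w‖ = 1 := by
  rw [sub_eq_add_neg, norm_add_eq_max_of_norm_ne_norm (by simpa using hw.ne'), norm_one,
    norm_neg, max_eq_left hw.le]

lemma norm_prod_sub_one_lt {s : Finset ι} {f : ι → K} {δ : ℝ} (hδ0 : 0 < δ) (hδ1 : δ ≤ 1)
    (h : ∀ i ∈ s, ‖f i - 1‖ < δ) : ‖∏ i ∈ s, f i - 1‖ < δ := by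
  classical
  induction s using Finset.cons_induction with
  | empty => simpa using hδ0
  | cons a s _ ih =>
    have ih' : ‖∏ i ∈ s, f i - 1‖ < δ := ih fun i hi => h i (Finset.mem_cons_of_mem hi)
    have hfa : ‖f a - 1‖ < δ := h a (Finset.mem_cons_self a s)
    rw [Finset.prod_cons, show f a * ∏ i ∈ s, f i - 1 = f a * (∏ i ∈ s, f i - 1) + (f a - 1) by
      ring]
    refine (norm_add_le_max _ _).trans_lt (max_lt ?_ hfa)
    calc ‖f a * (∏ i ∈ s, f i - 1)‖ ≤ 1 * ‖∏ i ∈ s, f i - 1‖ := by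
          rw [norm_mul]
          gcongr
          exact norm_le_one_of_norm_sub_one_le (hfa.le.trans hδ1)
      _ < δ := by rwa [one_mul]

lemma exists_forall_disjoint_norm_prod_sub_one_lt {f : ι → K} (hf : Tendsto f cofinite (𝓝 1))
    {δ : ℝ} (hδ0 : 0 < δ) (hδ1 : δ ≤ 1) :
    ∃ s : Finset ι, ∀ t : Finset ι, Disjoint t s → ‖∏ i ∈ t, f i - 1‖ < δ := by
  have hev : ∀ᶠ i in cofinite, ‖f i - 1‖ < δ :=
    (tendsto_iff_norm_sub_tendsto_zero.1 hf).eventually (gt_mem_nhds hδ0)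
  refine ⟨(eventually_cofinite.1 hev).toFinset, fun t ht =>
    norm_prod_sub_one_lt hδ0 hδ1 fun i hi => ?_⟩
  by_contra hi'
  exact Finset.disjoint_left.1 ht hi (by simpa using hi')

/-- The multiplicative analogue of `NonarchimedeanAddGroup.summable_of_tendsto_cofinite_zero`
for a complete ultrametric field, whose multiplicative monoid is not a group. -/
theorem multipliable_of_tendsto_cofinite_one [CompleteSpace K] {f : ι → K}
    (hf : Tendsto f cofinite (𝓝 1)) : Multipliable f := by
  classical
  refine cauchySeq_tendsto_of_complete (Metric.cauchySeq_iff'.2 fun ε hε => ?_)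
  obtain ⟨s₁, h₁⟩ := exists_forall_disjoint_norm_prod_sub_one_lt hf one_pos le_rfl
  set P := ∏ i ∈ s₁, f i
  have hP : 0 < ‖P‖ + 1 := by positivity
  obtain ⟨s₂, h₂⟩ := exists_forall_disjoint_norm_prod_sub_one_lt hf
    (δ := min 1 (ε / (‖P‖ + 1))) (by positivity) (min_le_left _ _)
  refine ⟨s₁ ∪ s₂, fun n hn => ?_⟩
  have hN : ‖∏ i ∈ s₁ ∪ s₂, f i‖ ≤ ‖P‖ := by
    rw [← Finset.prod_sdiff Finset.subset_union_left, norm_mul]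
    have := h₁ ((s₁ ∪ s₂) \ s₁) Finset.sdiff_disjoint
    exact mul_le_of_le_one_left (norm_nonneg _) (norm_le_one_of_norm_sub_one_le this.le)
  have htail := h₂ (n \ (s₁ ∪ s₂))
    (Finset.disjoint_of_subset_right Finset.subset_union_right Finset.sdiff_disjoint)
  rw [dist_eq_norm, ← Finset.prod_sdiff hn, ← sub_one_mul, norm_mul]
  calc ‖∏ i ∈ n \ (s₁ ∪ s₂), f i - 1‖ * ‖∏ i ∈ s₁ ∪ s₂, f i‖
      ≤ ‖∏ i ∈ n \ (s₁ ∪ s₂), f i - 1‖ * (‖P‖ + 1) := by gcongr; linarith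
    _ < ε / (‖P‖ + 1) * (‖P‖ + 1) := by gcongr; exact htail.trans_le (min_le_right _ _)
    _ = ε := div_mul_cancel₀ _ hP.ne'

end IsUltrametricDist

theorem tprod_update_eq_mul {α β : Type*} [CommMonoid α] [TopologicalSpace α] [T2Space α]
    [ContinuousMul α] [DecidableEq β]
    {g : β → α} {b : β} (hg : Multipliable (update g b 1)) (a : α) :
    ∏' x, update g b a x = a * ∏' x, update g b 1 x := by
  rw [Multipliable.tprod_eq_mul_tprod_ite' b (by rwa [update_idem]), update_self]
  congr 2
  funext x
  rcases eq_or_ne x b with rfl | hx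
  · simp
  · simp [hx]

section fc

variable {K : Type*} [NormedField K] [CompleteSpace K] [IsUltrametricDist K]

lemma exists_fc_update_eq_mul (p : ℕ) {c : ℕ → K} (hc : Tendsto c atTop (cobounded K))
    {j : ℕ} (hj : 1 ≤ j) (z : K) : ∃ A : K, ∀ t : K, fc p (update c j t) z = (1 - z / t) * A := by
  classical
  set g : ℕ → K := fun n => 1 - z / c (n + 1)
  have hg : Tendsto g cofinite (𝓝 1) := by
    rw [Nat.cofinite_eq_atTop]
    simpa [g, div_eq_mul_inv] using tendsto_const_nhds.sub
      (((tendsto_inv₀_cobounded.comp hc).comp (tendsto_add_atTop_nat 1)).const_mul z)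
  have hg' : Multipliable (update g (j - 1) 1) :=
    IsUltrametricDist.multipliable_of_tendsto_cofinite_one <| hg.congr' <|
      (eventually_cofinite_ne (j - 1)).mono fun n hn => (update_of_ne hn _ _).symm
  refine ⟨z ^ p / p * ∏' n, update g (j - 1) 1 n, fun t => ?_⟩
  have hupdate : (fun n => 1 - z / update c j t (n + 1)) = update g (j - 1) (1 - z / t) := by
    funext n
    rcases eq_or_ne n (j - 1) with rfl | hn
    · simp [Nat.sub_add_cancel hj]
    · simp [g, hn, update_of_ne (show n + 1 ≠ j by omega)]
  rw [fc, hupdate, tprod_update_eq_mul hg']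
  ring

end fc

/-- **Proposition 5.4.** For `|z| < R_j`, the partial derivative of `f_c(z)` with respect
to the parameter `c_j` satisfies `|∂_j f_c(z)| = |z| |f_c(z)| / R_j²`. -/
theorem partial_deriv_fc
    (p : ℕ) [Fact p.Prime] (K : Type*) [NontriviallyNormedField K] [Algebra ℚ_[p] K]
    (hK : IsCp p K) (R : ℕ → ℝ) (hR : IsGenericRadii p R)
    (c : ℕ → K) (hc : InC p R c) (j : ℕ) (hj : 1 ≤ j) :
    ∀ z : K, ‖z‖ < R j →
      ‖deriv (fun t : K => fc p (Function.update c j t) z) (c j)‖ =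
        ‖z‖ * ‖fc p c z‖ / R j ^ 2 := by
  have := hK.complete
  have := IsUltrametricDist.isUltrametricDist_of_forall_norm_add_le_max_norm hK.isNonarch
  intro z hz
  have hcj : ‖c j‖ = R j := hc j hj
  have hcj0 : c j ≠ 0 := norm_pos_iff.1 (hcj ▸ (norm_nonneg z).trans_lt hz)
  have hc_cobounded : Tendsto c atTop (cobounded K) :=
    tendsto_norm_atTop_iff_cobounded.1 <| hR.1.2.2.congr' <|
      eventually_atTop.2 ⟨1, fun n hn => (hc n hn).symm⟩
  obtain ⟨A, hA⟩ := exists_fc_update_eq_mul p hc_cobounded hj z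
  have hfc : fc p c z = (1 - z / c j) * A := by simpa using hA (c j)
  have hderiv : HasDerivAt (fun t => (1 - z / t) * A) (z / c j ^ 2 * A) (c j) := by
    have h := (((hasDerivAt_inv hcj0).const_mul z).const_sub 1).mul_const A
    simp only [← div_eq_mul_inv] at h
    exact h.congr_deriv (by ring)
  have hzc : ‖z / c j‖ < 1 := by
    rwa [norm_div, hcj, div_lt_one (hcj ▸ norm_pos_iff.2 hcj0)]
  rw [funext hA, hderiv.deriv, hfc, norm_mul, norm_mul, norm_div, norm_pow, hcj,
    IsUltrametricDist.norm_one_sub_of_norm_lt_one hzc]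
  ring
end
end
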